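/- arXiv:2102.01546 — 8 statements merged into one kernel-verified Lean document; each statement's English description precedes it below -/
import Mathlib

section
/- Let X be a real Banach space, M ⊆ X a bounded set and ε > 0. If M is not ε-weakly precompact, then M contains an ℓ₁-sequence with constant ε/2 (i.e., there is a sequence of elements of M that is an ℓ₁-sequence with constant ε/2). -/
open Filter Topology

/-- `δ((x_n)) ≤ ε`: for every functional in the closed unit ball of the dual,
`limsup x*(x_n) − liminf x*(x_n) ≤ ε`. -/
def DeltaLE {E : Type*} [NormedAddCommGroup E] [NormedSpace ℝ E] (x : ℕ → E) (ε : ℝ) : Prop :=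
  ∀ f : E →L[ℝ] ℝ, ‖f‖ ≤ 1 →
    Filter.limsup (fun n => f (x n)) Filter.atTop
      - Filter.liminf (fun n => f (x n)) Filter.atTop ≤ ε

/-- A set `M` is `ε`-weakly precompact if it is bounded and every sequence in `M`
admits a subsequence `(x_{n_k})` with `δ((x_{n_k})) ≤ ε`. -/
def IsWeaklyPrecompactWith {E : Type*} [NormedAddCommGroup E] [NormedSpace ℝ E]
    (ε : ℝ) (M : Set E) : Prop :=
  Bornology.IsBounded M ∧
    ∀ x : ℕ → E, (∀ n, x n ∈ M) →
      ∃ φ : ℕ → ℕ, StrictMono φ ∧ DeltaLE (fun k => x (φ k)) ε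

/-- `(x_n)` is an `ℓ₁`-sequence with constant `c`. -/
def IsL1SeqWith {E : Type*} [NormedAddCommGroup E] [NormedSpace ℝ E]
    (c : ℝ) (x : ℕ → E) : Prop :=
  Bornology.IsBounded (Set.range x) ∧
    ∀ (m : ℕ) (a : ℕ → ℝ),
      c * ∑ n ∈ Finset.range m, |a n| ≤ ‖∑ n ∈ Finset.range m, a n • x n‖

namespace RosenthalAux

/-- Dependent choice producing a sequence with index-dependent invariant. -/
theorem seqChoice {α : Type*} (P : ℕ → α → Prop) (R : ℕ → α → α → Prop)
    (h0 : ∃ a, P 0 a) (hstep : ∀ n a, P n a → ∃ b, P (n + 1) b ∧ R n a b) :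
    ∃ f : ℕ → α, (∀ n, P n (f n)) ∧ ∀ n, R n (f n) (f (n + 1)) := by
  classical
  choose! F hF hR using hstep
  obtain ⟨a0, ha0⟩ := h0
  refine ⟨fun n => Nat.rec a0 F n, ?_, ?_⟩
  · have hP : ∀ n, P n (Nat.rec a0 F n) := by
      intro n
      induction n with
      | zero => exact ha0
      | succ n ih => exact hF n _ ih
    exact hP
  · intro n
    have hP : ∀ n, P n (Nat.rec a0 F n) := by
      intro n
      induction n with
      | zero => exact ha0
      | succ n ih => exact hF n _ ih
    exact hR n _ (hP n)

section Galvin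

variable (Fam : Finset ℕ → Prop)

/-- `N` accepts `s`: every infinite subset of `N` has an initial segment `t`
with `s ∪ t ∈ Fam`. -/
def Accepts (N : Set ℕ) (s : Finset ℕ) : Prop :=
  ∀ X : Set ℕ, X ⊆ N → X.Infinite →
    ∃ t : Finset ℕ, ↑t ⊆ X ∧ (∀ a ∈ X, a ∉ t → ∀ b ∈ t, b < a) ∧ Fam (s ∪ t)

/-- `N` rejects `s`: no infinite subset of `N` accepts `s`. -/
def Rejects (N : Set ℕ) (s : Finset ℕ) : Prop :=
  ∀ N' : Set ℕ, N' ⊆ N → N'.Infinite → ¬ Accepts Fam N' s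

variable {Fam}

theorem Accepts.mono {N N' : Set ℕ} {s : Finset ℕ} (h : Accepts Fam N s) (hsub : N' ⊆ N) :
    Accepts Fam N' s := fun X hX hXinf => h X (hX.trans hsub) hXinf

theorem Rejects.mono {N N' : Set ℕ} {s : Finset ℕ} (h : Rejects Fam N s) (hsub : N' ⊆ N) :
    Rejects Fam N' s := fun Y hY hYinf => h Y (hY.trans hsub) hYinf

theorem accepts_of_fam {N : Set ℕ} {s : Finset ℕ} (hs : Fam s) : Accepts Fam N s := by
  intro X _ _
  exact ⟨∅, by simp, by simp, by simpa using hs⟩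

theorem not_fam_of_rejects {N : Set ℕ} {s : Finset ℕ} (hN : N.Infinite)
    (h : Rejects Fam N s) : ¬ Fam s :=
  fun hs => h N subset_rfl hN (accepts_of_fam hs)

/-- Key combinatorial-forcing lemma: if `N` rejects `s`, there is an infinite
`N' ⊆ N` rejecting `insert n s` for every `n ∈ N'`. -/
theorem exists_subset_rejects_insert {N : Set ℕ} {s : Finset ℕ} (hN : N.Infinite)
    (hrej : Rejects Fam N s) :
    ∃ N' : Set ℕ, N' ⊆ N ∧ N'.Infinite ∧ ∀ n ∈ N', Rejects Fam N' (insert n s) := by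
  classical
  by_contra hcon
  push_neg at hcon
  -- every infinite subset of N contains a point n where rejection of `insert n s` fails
  have hcon' : ∀ A : Set ℕ, A ⊆ N → A.Infinite →
      ∃ n ∈ A, ∃ B : Set ℕ, B ⊆ A ∧ B.Infinite ∧ Accepts Fam B (insert n s) := by
    intro A hA hAinf
    obtain ⟨n, hn, hnrej⟩ := hcon A hA hAinf
    simp only [Rejects, not_forall] at hnrej
    obtain ⟨B, hB1, hB2, hB3⟩ := hnrej
    exact ⟨n, hn, B, hB1, hB2, not_not.mp hB3⟩
  -- build a fusion sequence
  have hchain : ∃ f : ℕ → ℕ × Set ℕ,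
      (∀ k, (f k).1 ∈ N ∧ (f k).2 ⊆ N ∧ (f k).2.Infinite ∧
        (∀ m ∈ (f k).2, (f k).1 < m) ∧ Accepts Fam (f k).2 (insert (f k).1 s)) ∧
      ∀ k, (f (k + 1)).2 ⊆ (f k).2 ∧ (f (k + 1)).1 ∈ (f k).2 := by
    refine seqChoice (α := ℕ × Set ℕ)
      (P := fun _ a => a.1 ∈ N ∧ a.2 ⊆ N ∧ a.2.Infinite ∧
        (∀ m ∈ a.2, a.1 < m) ∧ Accepts Fam a.2 (insert a.1 s))
      (R := fun _ a b => b.2 ⊆ a.2 ∧ b.1 ∈ a.2) ?_ ?_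
    · obtain ⟨n, hn, B, hB1, hB2, hB3⟩ := hcon' N subset_rfl hN
      refine ⟨(n, B \ Set.Iic n), hn, (Set.diff_subset.trans hB1), hB2.diff (Set.finite_Iic n),
        ?_, hB3.mono Set.diff_subset⟩
      intro m hm
      simpa using hm.2
    · rintro k ⟨n, A⟩ ⟨h1, h2, h3, h4, h5⟩
      obtain ⟨n', hn', B, hB1, hB2, hB3⟩ := hcon' A h2 h3
      refine ⟨(n', B \ Set.Iic n'), ⟨h2 hn', (Set.diff_subset.trans hB1).trans h2,
        hB2.diff (Set.finite_Iic n'), ?_, hB3.mono Set.diff_subset⟩,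
        (Set.diff_subset.trans hB1), hn'⟩
      intro m hm
      simpa using hm.2
  obtain ⟨f, hP, hR⟩ := hchain
  set u : ℕ → ℕ := fun k => (f k).1 with hu
  set A : ℕ → Set ℕ := fun k => (f k).2 with hA
  have hAmono : ∀ i j, i ≤ j → A j ⊆ A i := by
    intro i j hij
    induction j with
    | zero => simp_all
    | succ j ih =>
      rcases Nat.lt_or_ge i (j+1) with hlt | hge
      · exact (hR j).1.trans (ih (by omega))
      · have : i = j + 1 := by omega
        simp [this]
  have humem : ∀ i j, i < j → u j ∈ A i := by
    intro i j hij
    have h1 : u j ∈ A (j - 1) := by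
      have := (hR (j - 1)).2
      have hj : j - 1 + 1 = j := by omega
      rwa [hj] at this
    exact hAmono i (j - 1) (by omega) h1
  have humono : StrictMono u := by
    have hsucc : ∀ k, u k < u (k + 1) := by
      intro k
      exact (hP k).2.2.2.1 _ (hR k).2
    exact strictMono_nat_of_lt_succ hsucc
  have hXN : Set.range u ⊆ N := by
    rintro _ ⟨k, rfl⟩
    exact (hP k).1
  have hXinf : (Set.range u).Infinite := Set.infinite_range_of_injective humono.injective
  apply hrej (Set.range u) hXN hXinf
  -- show range u accepts s
  intro Y hY hYinf
  have hYne : Y.Nonempty := hYinf.nonempty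
  set y := sInf Y with hy
  have hymem : y ∈ Y := Nat.sInf_mem hYne
  obtain ⟨i, hi⟩ := hY hymem
  have hY' : Y \ {y} ⊆ A i := by
    rintro m ⟨hm1, hm2⟩
    obtain ⟨j, hj⟩ := hY hm1
    have : y < m := lt_of_le_of_ne (Nat.sInf_le hm1) (Ne.symm (by simpa using hm2))
    have : i < j := by
      by_contra hc
      push_neg at hc
      have := humono.monotone hc
      omega
    rw [← hj]
    exact humem i j this
  obtain ⟨t, ht1, ht2, ht3⟩ := (hP i).2.2.2.2 (Y \ {y}) hY' (hYinf.diff (Set.finite_singleton y))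
  refine ⟨insert y t, ?_, ?_, ?_⟩
  · intro b hb
    rcases Finset.mem_insert.mp (by exact_mod_cast hb) with rfl | hb'
    · exact hymem
    · exact (ht1 hb').1
  · intro a ha hat b hb
    rcases Finset.mem_insert.mp hb with rfl | hb'
    · have hay : a ≠ y := fun hc => hat (by simp [hc])
      exact lt_of_le_of_ne (Nat.sInf_le ha) (Ne.symm hay)
    · have ha' : a ∈ Y \ {y} := ⟨ha, by
        intro hc
        apply hat
        simp only [Set.mem_singleton_iff] at hc
        simp [hc]⟩
      exact ht2 a ha' (fun hc => hat (Finset.mem_insert_of_mem hc)) b hb'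
  · have : s ∪ insert y t = insert (u i) s ∪ t := by
      rw [hi]
      ext z
      simp only [Finset.mem_union, Finset.mem_insert]
      tauto
    rw [this]
    exact ht3

theorem rejects_insert_finite {N : Set ℕ} (hN : N.Infinite) (S : Finset (Finset ℕ))
    (h : ∀ s ∈ S, Rejects Fam N s) :
    ∃ N' : Set ℕ, N' ⊆ N ∧ N'.Infinite ∧
      ∀ s ∈ S, ∀ n ∈ N', Rejects Fam N' (insert n s) := by
  classical
  induction S using Finset.induction_on generalizing N with
  | empty => exact ⟨N, subset_rfl, hN, by simp⟩
  | @insert s S hs ih =>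
    obtain ⟨N1, hsub1, hinf1, h1⟩ :=
      exists_subset_rejects_insert hN (h s (Finset.mem_insert_self s S))
    obtain ⟨N2, hsub2, hinf2, h2⟩ := ih hinf1
      (fun t ht => (h t (Finset.mem_insert_of_mem ht)).mono hsub1)
    refine ⟨N2, hsub2.trans hsub1, hinf2, ?_⟩
    intro t ht n hn
    rcases Finset.mem_insert.mp ht with rfl | ht'
    · exact (h1 n (hsub2 hn)).mono hsub2
    · exact h2 t ht' n hn

/-- Galvin's dichotomy for an arbitrary family of finite subsets of `ℕ`. -/
theorem galvin (Fam : Finset ℕ → Prop) (N : Set ℕ) (hN : N.Infinite) :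
    (∃ M : Set ℕ, M ⊆ N ∧ M.Infinite ∧ ∀ F : Finset ℕ, ↑F ⊆ M → ¬ Fam F) ∨
    (∃ M : Set ℕ, M ⊆ N ∧ M.Infinite ∧ ∀ X : Set ℕ, X ⊆ M → X.Infinite →
        ∃ t : Finset ℕ, ↑t ⊆ X ∧ (∀ a ∈ X, a ∉ t → ∀ b ∈ t, b < a) ∧ Fam t) := by
  classical
  by_cases hacc : ∃ N' : Set ℕ, N' ⊆ N ∧ N'.Infinite ∧ Accepts Fam N' ∅
  · right
    obtain ⟨M, h1, h2, h3⟩ := hacc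
    refine ⟨M, h1, h2, fun X hX hXinf => ?_⟩
    obtain ⟨t, ht1, ht2, ht3⟩ := h3 X hX hXinf
    exact ⟨t, ht1, ht2, by simpa using ht3⟩
  · left
    have hrej : Rejects Fam N ∅ := by
      intro N' h1 h2 hA
      exact hacc ⟨N', h1, h2, hA⟩
    have hchain : ∃ f : ℕ → Finset ℕ × Set ℕ,
        (∀ k, ↑(f k).1 ⊆ N ∧ (f k).2 ⊆ N ∧ (f k).2.Infinite ∧ (f k).1.card = k ∧
          (∀ b ∈ (f k).1, ∀ a ∈ (f k).2, b < a) ∧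
          (∀ s : Finset ℕ, s ⊆ (f k).1 → Rejects Fam (f k).2 s)) ∧
        ∀ k, (f (k + 1)).2 ⊆ (f k).2 ∧ (f k).1 ⊆ (f (k + 1)).1 := by
      refine seqChoice (α := Finset ℕ × Set ℕ)
        (P := fun k a => ↑a.1 ⊆ N ∧ a.2 ⊆ N ∧ a.2.Infinite ∧ a.1.card = k ∧
          (∀ b ∈ a.1, ∀ a' ∈ a.2, b < a') ∧
          (∀ s : Finset ℕ, s ⊆ a.1 → Rejects Fam a.2 s))
        (R := fun _ a b => b.2 ⊆ a.2 ∧ a.1 ⊆ b.1) ?_ ?_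
      · refine ⟨(∅, N), by simp, subset_rfl, hN, by simp, by simp, ?_⟩
        intro s hs
        rw [Finset.subset_empty.mp hs]
        exact hrej
      · rintro k ⟨S, A⟩ ⟨p1, p2, p3, p4, p5, p6⟩
        obtain ⟨A1, hA1sub, hA1inf, hA1⟩ := rejects_insert_finite p3 S.powerset
          (fun s hs => p6 s (Finset.mem_powerset.mp hs))
        obtain ⟨m, hm⟩ := hA1inf.nonempty
        have hmS : m ∉ S := by
          intro hc
          exact lt_irrefl m (p5 m hc m (hA1sub hm))
        refine ⟨(insert m S, A1 \ Set.Iic m), ⟨?_, ?_, ?_, ?_, ?_, ?_⟩, ?_, ?_⟩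
        · intro b hb
          rcases Finset.mem_insert.mp (by exact_mod_cast hb) with rfl | hb'
          · exact p2 (hA1sub hm)
          · exact p1 hb'
        · exact (Set.diff_subset.trans hA1sub).trans p2
        · exact hA1inf.diff (Set.finite_Iic m)
        · rw [Finset.card_insert_of_notMem hmS, p4]
        · intro b hb a' ha'
          rcases Finset.mem_insert.mp hb with rfl | hb'
          · simpa using ha'.2
          · exact p5 b hb' a' (hA1sub ha'.1)
        · intro s hs
          by_cases hms : m ∈ s
          · have hsub : s.erase m ⊆ S := by
              intro b hb
              have := hs (Finset.mem_of_mem_erase hb)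
              rcases Finset.mem_insert.mp this with rfl | h'
              · exact absurd rfl (Finset.ne_of_mem_erase hb)
              · exact h'
            have := hA1 (s.erase m) (Finset.mem_powerset.mpr hsub) m hm
            rw [Finset.insert_erase hms] at this
            exact this.mono Set.diff_subset
          · have hsub : s ⊆ S := by
              intro b hb
              rcases Finset.mem_insert.mp (hs hb) with rfl | h'
              · exact absurd hb hms
              · exact h'
            exact (p6 s hsub).mono (Set.diff_subset.trans hA1sub)
        · exact Set.diff_subset.trans hA1sub
        · exact Finset.subset_insert m S
    obtain ⟨f, hP, hR⟩ := hchain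
    set S : ℕ → Finset ℕ := fun k => (f k).1 with hS
    have hSmono : ∀ i j, i ≤ j → S i ⊆ S j := by
      intro i j hij
      induction j with
      | zero => simp_all
      | succ j ih =>
        rcases Nat.lt_or_ge i (j+1) with hlt | hge
        · exact (ih (by omega)).trans (hR j).2
        · have : i = j + 1 := by omega
          simp [this]
    refine ⟨⋃ k, ↑(S k), ?_, ?_, ?_⟩
    · intro b hb
      obtain ⟨k, hk⟩ := Set.mem_iUnion.mp hb
      exact (hP k).1 hk
    · intro hfin
      have hcard : ∀ k, k ≤ hfin.toFinset.card := by
        intro k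
        rw [← (hP k).2.2.2.1]
        apply Finset.card_le_card
        intro b hb
        rw [Set.Finite.mem_toFinset]
        exact Set.mem_iUnion.mpr ⟨k, hb⟩
      exact absurd (hcard (hfin.toFinset.card + 1)) (by omega)
    · intro F hF
      have hex : ∀ b ∈ F, ∃ k, b ∈ S k := by
        intro b hb
        obtain ⟨k, hk⟩ := Set.mem_iUnion.mp (hF hb)
        exact ⟨k, hk⟩
      choose g hg using hex
      have hFS : F ⊆ S (F.sup fun b => if hb : b ∈ F then g b hb else 0) := by
        intro b hb
        apply hSmono (g b hb) _ _ (hg b hb)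
        have := Finset.le_sup (f := fun b => if hb : b ∈ F then g b hb else 0) hb
        simpa [hb] using this
      intro hfam
      exact not_fam_of_rejects (hP _).2.2.1 ((hP _).2.2.2.2.2 F hFS) hfam

end Galvin

theorem infGt {s : Set ℕ} (hs : s.Infinite) (a : ℕ) : ∃ b ∈ s, a < b := by
  by_contra h
  push_neg at h
  exact hs ((Set.finite_Iic a).subset (fun b hb => Set.mem_Iic.mpr (h b hb)))

/-- Number of "spare" indices needed below stage `j` for the parity alignment. -/
def cAux (σ : ℕ → Bool) : ℕ → ℕ
  | 0 => 0
  | (j+1) => cAux σ j + (if Even (j + cAux σ j) ↔ σ j = true then 0 else 1)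

theorem even_cAux (σ : ℕ → Bool) (j : ℕ) : Even (j + cAux σ (j + 1)) ↔ σ j = true := by
  by_cases h : Even (j + cAux σ j) ↔ σ j = true
  · simpa [cAux, h] using h
  · simp only [cAux, if_neg h]
    have heq : j + (cAux σ j + 1) = (j + cAux σ j) + 1 := by ring
    rw [heq, Nat.even_add_one]
    tauto

/-- The `j`-th block of indices: always `2j+1`, plus the spare `2j` when needed. -/
def blockF (σ : ℕ → Bool) (i : ℕ) : Finset ℕ :=
  if Even (i + cAux σ i) ↔ σ i = true then {2*i+1} else {2*i, 2*i+1}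

theorem mem_blockF_bounds {σ : ℕ → Bool} {i t : ℕ} (h : t ∈ blockF σ i) :
    2*i ≤ t ∧ t ≤ 2*i+1 := by
  unfold blockF at h
  split at h <;> simp at h <;> omega

theorem odd_mem_blockF (σ : ℕ → Bool) (i : ℕ) : 2*i+1 ∈ blockF σ i := by
  unfold blockF
  split <;> simp

theorem card_biUnion_blockF (σ : ℕ → Bool) :
    ∀ j, ((Finset.range j).biUnion (blockF σ)).card = j + cAux σ j := by
  intro j
  induction j with
  | zero => simp [cAux]
  | succ j ih =>
    rw [Finset.range_add_one, Finset.biUnion_insert]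
    have hdisj : Disjoint (blockF σ j) ((Finset.range j).biUnion (blockF σ)) := by
      rw [Finset.disjoint_left]
      intro t ht htu
      obtain ⟨i, hi, hti⟩ := Finset.mem_biUnion.mp htu
      have h1 := mem_blockF_bounds ht
      have h2 := mem_blockF_bounds hti
      have := Finset.mem_range.mp hi
      omega
    rw [Finset.card_union_of_disjoint hdisj, ih]
    have hcb : (blockF σ j).card = if Even (j + cAux σ j) ↔ σ j = true then 1 else 2 := by
      unfold blockF
      split
      · simp
      · rw [Finset.card_insert_of_notMem (by simp), Finset.card_singleton]
    rw [hcb]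
    simp only [cAux]
    split <;> omega

theorem filter_biUnion_blockF (σ : ℕ → Bool) (m j : ℕ) (hj : j < m) :
    (((Finset.range m).biUnion (blockF σ)).filter (· < 2*j+1)).card = j + cAux σ (j + 1) := by
  have hset : ((Finset.range m).biUnion (blockF σ)).filter (· < 2*j+1)
      = ((Finset.range j).biUnion (blockF σ)) ∪
        (if Even (j + cAux σ j) ↔ σ j = true then ∅ else {2*j}) := by
    ext t
    simp only [Finset.mem_filter, Finset.mem_biUnion, Finset.mem_range, Finset.mem_union]
    constructor
    · rintro ⟨⟨i, hi, hti⟩, hlt⟩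
      have hb := mem_blockF_bounds hti
      rcases Nat.lt_trichotomy i j with h' | rfl | h'
      · exact Or.inl ⟨i, h', hti⟩
      · right
        have ht2j : t = 2*i := by omega
        subst ht2j
        unfold blockF at hti
        split at hti
        · simp at hti
        · simp_all
      · omega
    · intro h'
      rcases h' with ⟨i, hi, hti⟩ | h'
      · have hb := mem_blockF_bounds hti
        exact ⟨⟨i, by omega, hti⟩, by omega⟩
      · split at h'
        · simp at h'
        · simp only [Finset.mem_singleton] at h'
          subst h'
          refine ⟨⟨j, hj, ?_⟩, by omega⟩
          unfold blockF
          split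
          · simp_all
          · simp
  rw [hset]
  have hdisj : Disjoint ((Finset.range j).biUnion (blockF σ))
      (if Even (j + cAux σ j) ↔ σ j = true then (∅ : Finset ℕ) else {2*j}) := by
    rw [Finset.disjoint_right]
    intro t ht htu
    obtain ⟨i, hi, hti⟩ := Finset.mem_biUnion.mp htu
    have h2 := mem_blockF_bounds hti
    have := Finset.mem_range.mp hi
    split at ht
    · simp at ht
    · simp only [Finset.mem_singleton] at ht
      omega
  rw [Finset.card_union_of_disjoint hdisj, card_biUnion_blockF]
  simp only [cAux]
  split <;> simp <;> omega

end RosenthalAux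

theorem not_weaklyPrecompact_contains_l1_seq
    {X : Type*} [NormedAddCommGroup X] [NormedSpace ℝ X] [CompleteSpace X]
    (M : Set X) (hM : Bornology.IsBounded M) (ε : ℝ) (hε : 0 < ε)
    (h : ¬ IsWeaklyPrecompactWith ε M) :
    ∃ x : ℕ → X, (∀ n, x n ∈ M) ∧ IsL1SeqWith (ε / 2) x := by
  classical
  obtain ⟨C, hC⟩ := isBounded_iff_forall_norm_le.mp hM
  -- Step 1: a sequence in M all of whose subsequences oscillate more than ε
  have hosc : ∃ x : ℕ → X, (∀ n, x n ∈ M) ∧ ∀ φ : ℕ → ℕ, StrictMono φ →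
      ∃ f : X →L[ℝ] ℝ, ‖f‖ ≤ 1 ∧
        ε < Filter.limsup (fun k => f (x (φ k))) Filter.atTop
            - Filter.liminf (fun k => f (x (φ k))) Filter.atTop := by
    rcases not_and_or.mp h with h1 | h2
    · exact absurd hM h1
    push_neg at h2
    obtain ⟨x, hx1, hx2⟩ := h2
    refine ⟨x, hx1, fun φ hφ => ?_⟩
    have hnd := hx2 φ hφ
    simp only [DeltaLE] at hnd
    push_neg at hnd
    exact hnd
  obtain ⟨x, hxM, hxosc⟩ := hosc
  have hfb : ∀ (f : X →L[ℝ] ℝ), ‖f‖ ≤ 1 → ∀ n, |f (x n)| ≤ C := by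
    intro f hf n
    calc |f (x n)| = ‖f (x n)‖ := (Real.norm_eq_abs _).symm
    _ ≤ ‖f‖ * ‖x n‖ := f.le_opNorm _
    _ ≤ 1 * C := mul_le_mul hf (hC _ (hxM n)) (norm_nonneg _) zero_le_one
    _ = C := one_mul C
  -- Step 2: stabilize a rational pair
  have step2 : ∃ (P Q : ℝ) (N₀ : Set ℕ), ε < Q - P ∧ N₀.Infinite ∧
      ∀ N' : Set ℕ, N' ⊆ N₀ → N'.Infinite → ∃ f : X →L[ℝ] ℝ, ‖f‖ ≤ 1 ∧
        {n | n ∈ N' ∧ Q < f (x n)}.Infinite ∧ {n | n ∈ N' ∧ f (x n) < P}.Infinite := by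
    by_contra hno
    push_neg at hno
    obtain ⟨e, he⟩ := exists_surjective_nat (ℚ × ℚ)
    have hchain : ∃ Nc : ℕ → Set ℕ,
        (∀ k, (Nc k).Infinite ∧ ∀ j < k, ε < ((e j).2 : ℝ) - ((e j).1 : ℝ) →
          ∀ f : X →L[ℝ] ℝ, ‖f‖ ≤ 1 →
            {n | n ∈ Nc k ∧ ((e j).2 : ℝ) < f (x n)}.Infinite →
            ¬ {n | n ∈ Nc k ∧ f (x n) < ((e j).1 : ℝ)}.Infinite) ∧
        ∀ k, Nc (k + 1) ⊆ Nc k := by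
      refine RosenthalAux.seqChoice (α := Set ℕ)
        (P := fun k A => A.Infinite ∧ ∀ j < k, ε < ((e j).2 : ℝ) - ((e j).1 : ℝ) →
          ∀ f : X →L[ℝ] ℝ, ‖f‖ ≤ 1 →
            {n | n ∈ A ∧ ((e j).2 : ℝ) < f (x n)}.Infinite →
            ¬ {n | n ∈ A ∧ f (x n) < ((e j).1 : ℝ)}.Infinite)
        (R := fun _ A B => B ⊆ A) ?_ ?_
      · exact ⟨Set.univ, Set.infinite_univ, fun j hj => absurd hj (Nat.not_lt_zero j)⟩
      · intro k A hA
        obtain ⟨hAinf, hkill⟩ := hA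
        by_cases hk : ε < ((e k).2 : ℝ) - ((e k).1 : ℝ)
        · obtain ⟨A', hA'sub, hA'inf, hA'⟩ := hno ((e k).1 : ℝ) ((e k).2 : ℝ) A hk hAinf
          refine ⟨A', ⟨hA'inf, ?_⟩, hA'sub⟩
          intro j hj hdiff f hf hQ hP
          rcases Nat.lt_or_ge j k with hjk | hjk
          · exact hkill j hjk hdiff f hf
              (hQ.mono (fun n hn => ⟨hA'sub hn.1, hn.2⟩))
              (hP.mono (fun n hn => ⟨hA'sub hn.1, hn.2⟩))
          · have hjk' : j = k := by omega
            subst hjk'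
            exact Set.not_infinite.mpr (hA' f hf hQ) hP
        · refine ⟨A, ⟨hAinf, ?_⟩, subset_rfl⟩
          intro j hj hdiff f hf
          rcases Nat.lt_or_ge j k with hjk | hjk
          · exact hkill j hjk hdiff f hf
          · have hjk' : j = k := by omega
            subst hjk'
            exact absurd hdiff hk
    obtain ⟨Nc, hNcP, hNcR⟩ := hchain
    have hNcmono : ∀ i j, i ≤ j → Nc j ⊆ Nc i := by
      intro i j hij
      induction j with
      | zero =>
        have : i = 0 := by omega
        simp [this]
      | succ j ih =>
        rcases Nat.lt_or_ge i (j + 1) with hlt | hge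
        · exact (hNcR j).trans (ih (by omega))
        · have : i = j + 1 := by omega
          simp [this]
    have hdiag : ∃ u : ℕ → ℕ, (∀ k, u k ∈ Nc (k + 1)) ∧ ∀ k, u k < u (k + 1) := by
      refine RosenthalAux.seqChoice (α := ℕ) (P := fun k n => n ∈ Nc (k + 1))
        (R := fun _ a b => a < b) ?_ ?_
      · exact (hNcP 1).1.nonempty
      · intro k n _
        obtain ⟨b, hb, hlt⟩ := RosenthalAux.infGt (hNcP (k + 2)).1 n
        exact ⟨b, hb, hlt⟩
    obtain ⟨u, huN, husucc⟩ := hdiag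
    have humono : StrictMono u := strictMono_nat_of_lt_succ husucc
    obtain ⟨f, hf, hlim⟩ := hxosc u humono
    set v : ℕ → ℝ := fun k => f (x (u k)) with hv
    have hvb : ∀ k, |v k| ≤ C := fun k => hfb f hf (u k)
    have hbddle : IsBoundedUnder (· ≤ ·) atTop v :=
      isBoundedUnder_of ⟨C, fun k => (abs_le.mp (hvb k)).2⟩
    have hbddge : IsBoundedUnder (· ≥ ·) atTop v :=
      isBoundedUnder_of ⟨-C, fun k => (abs_le.mp (hvb k)).1⟩
    have hcoble : IsCoboundedUnder (· ≤ ·) atTop v := hbddge.isCoboundedUnder_le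
    have hcobge : IsCoboundedUnder (· ≥ ·) atTop v := hbddle.isCoboundedUnder_ge
    have hlim' : ε < limsup v atTop - liminf v atTop := hlim
    have hδ : 0 < (limsup v atTop - liminf v atTop - ε) / 3 := by linarith
    obtain ⟨p, hp1, hp2⟩ := exists_rat_btwn
      (show liminf v atTop < liminf v atTop + (limsup v atTop - liminf v atTop - ε) / 3 by
        linarith)
    obtain ⟨q, hq1, hq2⟩ := exists_rat_btwn
      (show limsup v atTop - (limsup v atTop - liminf v atTop - ε) / 3 < limsup v atTop by
        linarith)
    have hpq : ε < (q : ℝ) - (p : ℝ) := by linarith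
    have hfq : {k | (q : ℝ) < v k}.Infinite :=
      Nat.frequently_atTop_iff_infinite.mp (frequently_lt_of_lt_limsup hcoble hq2)
    have hfp : {k | v k < (p : ℝ)}.Infinite :=
      Nat.frequently_atTop_iff_infinite.mp (frequently_lt_of_liminf_lt hcobge hp1)
    obtain ⟨i, hi⟩ := he (p, q)
    have hdiff : ε < ((e i).2 : ℝ) - ((e i).1 : ℝ) := by rw [hi]; exact_mod_cast hpq
    have hkill := (hNcP (i + 1)).2 i (Nat.lt_succ_self i) hdiff f hf
    have himgQ : {n | n ∈ Nc (i + 1) ∧ ((e i).2 : ℝ) < f (x n)}.Infinite := by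
      have hbase : ({k | (q : ℝ) < v k} \ {k | k < i}).Infinite :=
        hfq.diff (Set.finite_Iio i)
      have himg := hbase.image (Set.injOn_of_injective humono.injective)
      apply himg.mono
      rintro _ ⟨k, ⟨hk1, hk2⟩, rfl⟩
      simp only [Set.mem_setOf_eq] at hk1 hk2
      refine ⟨hNcmono (i + 1) (k + 1) (by omega) (huN k), ?_⟩
      rw [hi]
      exact hk1
    have himgP : {n | n ∈ Nc (i + 1) ∧ f (x n) < ((e i).1 : ℝ)}.Infinite := by
      have hbase : ({k | v k < (p : ℝ)} \ {k | k < i}).Infinite :=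
        hfp.diff (Set.finite_Iio i)
      have himg := hbase.image (Set.injOn_of_injective humono.injective)
      apply himg.mono
      rintro _ ⟨k, ⟨hk1, hk2⟩, rfl⟩
      simp only [Set.mem_setOf_eq] at hk1 hk2
      refine ⟨hNcmono (i + 1) (k + 1) (by omega) (huN k), ?_⟩
      rw [hi]
      exact hk1
    exact hkill himgQ himgP
  obtain ⟨P, Q, N₀, hPQ, hN₀, hgood⟩ := step2
  rcases RosenthalAux.galvin
      (fun F => ¬ ∃ f : X →L[ℝ] ℝ, ‖f‖ ≤ 1 ∧ ∀ n ∈ F,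
        (Even ((F.filter (· < n)).card) → Q < f (x n)) ∧
        (¬ Even ((F.filter (· < n)).card) → f (x n) < P)) N₀ hN₀ with
    ⟨M', hM'sub, hM'inf, hM'good⟩ | ⟨M', hM'sub, hM'inf, hM'bad⟩
  · -- good case: every finite subset of M' realizes the alternating pattern
    have hMall : ∀ F : Finset ℕ, ↑F ⊆ M' → ∃ f : X →L[ℝ] ℝ, ‖f‖ ≤ 1 ∧ ∀ n ∈ F,
        (Even ((F.filter (· < n)).card) → Q < f (x n)) ∧
        (¬ Even ((F.filter (· < n)).card) → f (x n) < P) :=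
      fun F hF => not_not.mp (hM'good F hF)
    have hM'inf' : (setOf (fun n => n ∈ M')).Infinite := hM'inf
    set η : ℕ → ℕ := Nat.nth (fun n => n ∈ M') with hηdef
    have hηmono : StrictMono η := Nat.nth_strictMono hM'inf'
    have hηmem : ∀ t, η t ∈ M' := fun t => Nat.nth_mem_of_infinite hM'inf' t
    have hreal : ∀ (σ : ℕ → Bool) (m : ℕ), ∃ f : X →L[ℝ] ℝ, ‖f‖ ≤ 1 ∧
        ∀ j < m, (σ j = true → Q < f (x (η (2*j+1)))) ∧
          (σ j = false → f (x (η (2*j+1))) < P) := by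
      intro σ m
      set I : Finset ℕ := (Finset.range m).biUnion (RosenthalAux.blockF σ) with hIdef
      set F : Finset ℕ := I.image η with hFdef
      have hFM : ↑F ⊆ M' := by
        intro y hy
        simp only [hFdef, Finset.coe_image, Set.mem_image] at hy
        obtain ⟨s, _, rfl⟩ := hy
        exact hηmem s
      obtain ⟨f, hf1, hf2⟩ := hMall F hFM
      refine ⟨f, hf1, ?_⟩
      intro j hj
      have hjI : 2*j+1 ∈ I :=
        Finset.mem_biUnion.mpr ⟨j, Finset.mem_range.mpr hj, RosenthalAux.odd_mem_blockF σ j⟩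
      have hnF : η (2*j+1) ∈ F := Finset.mem_image_of_mem η hjI
      have himg : F.filter (· < η (2*j+1)) = (I.filter (· < 2*j+1)).image η := by
        ext y
        simp only [hFdef, Finset.mem_filter, Finset.mem_image]
        constructor
        · rintro ⟨⟨s, hs, rfl⟩, hlt⟩
          exact ⟨s, ⟨hs, hηmono.lt_iff_lt.mp hlt⟩, rfl⟩
        · rintro ⟨s, ⟨hs, hlt⟩, rfl⟩
          exact ⟨⟨s, hs, rfl⟩, hηmono hlt⟩
      have hrank : ((F.filter (· < η (2*j+1))).card) = j + RosenthalAux.cAux σ (j+1) := by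
        rw [himg, Finset.card_image_of_injective _ hηmono.injective]
        exact RosenthalAux.filter_biUnion_blockF σ m j hj
      have hcond := hf2 (η (2*j+1)) hnF
      rw [hrank] at hcond
      constructor
      · intro hσ
        exact hcond.1 ((RosenthalAux.even_cAux σ j).mpr hσ)
      · intro hσ
        apply hcond.2
        rw [RosenthalAux.even_cAux σ j, hσ]
        simp
    refine ⟨fun j => x (η (2*j+1)), fun j => hxM _, ?_, ?_⟩
    · apply hM.subset
      rintro _ ⟨j, rfl⟩
      exact hxM _
    · intro m a
      set σ : ℕ → Bool := fun j => decide (0 ≤ a j) with hσdef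
      obtain ⟨f, hf1, hf2⟩ := hreal σ m
      obtain ⟨g, hg1, hg2⟩ := hreal (fun j => !σ j) m
      set S : X := ∑ n ∈ Finset.range m, a n • x (η (2*n+1)) with hSdef
      have hkey : ∀ j < m, (Q - P) * |a j| ≤ a j * ((f - g) (x (η (2*j+1)))) := by
        intro j hj
        have hfg : ((f - g) (x (η (2*j+1)))) = f (x (η (2*j+1))) - g (x (η (2*j+1))) := rfl
        by_cases ha : 0 ≤ a j
        · have h1 : Q < f (x (η (2*j+1))) := (hf2 j hj).1 (by simp [hσdef, ha])
          have h2 : g (x (η (2*j+1))) < P := ((hg2 j hj).2 (by simp [hσdef, ha]))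
          rw [abs_of_nonneg ha, hfg]
          nlinarith
        · push_neg at ha
          have h1 : f (x (η (2*j+1))) < P := (hf2 j hj).2 (by simp [hσdef, not_le.mpr ha])
          have h2 : Q < g (x (η (2*j+1))) := (hg2 j hj).1 (by simp [hσdef, not_le.mpr ha])
          rw [abs_of_neg ha, hfg]
          nlinarith
      have hsum : (Q - P) * ∑ n ∈ Finset.range m, |a n| ≤ (f - g) S := by
        rw [hSdef, map_sum, Finset.mul_sum]
        apply Finset.sum_le_sum
        intro j hj
        rw [map_smul, smul_eq_mul]
        exact hkey j (Finset.mem_range.mp hj)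
      have hnorm : (f - g) S ≤ 2 * ‖S‖ := by
        have h1 : (f - g) S ≤ ‖(f - g) S‖ := by
          rw [Real.norm_eq_abs]
          exact le_abs_self _
        have h2 : ‖(f - g) S‖ ≤ ‖f - g‖ * ‖S‖ := (f - g).le_opNorm S
        have h3 : ‖f - g‖ ≤ 2 := by
          calc ‖f - g‖ ≤ ‖f‖ + ‖g‖ := norm_sub_le f g
          _ ≤ 2 := by linarith
        have h4 : ‖f - g‖ * ‖S‖ ≤ 2 * ‖S‖ :=
          mul_le_mul_of_nonneg_right h3 (norm_nonneg S)
        linarith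
      have habs : 0 ≤ ∑ n ∈ Finset.range m, |a n| :=
        Finset.sum_nonneg fun _ _ => abs_nonneg _
      have hfinal : ε * ∑ n ∈ Finset.range m, |a n| ≤ 2 * ‖S‖ := by
        have := mul_le_mul_of_nonneg_right hPQ.le habs
        linarith
      linarith
  · -- bad case: contradiction with the oscillation property
    exfalso
    obtain ⟨f, hf, hAinf, hBinf⟩ := hgood M' hM'sub hM'inf
    have hint : ∃ u : ℕ → ℕ,
        (∀ k, u k ∈ M' ∧ (Even k → Q < f (x (u k))) ∧ (¬ Even k → f (x (u k)) < P)) ∧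
        ∀ k, u k < u (k + 1) := by
      refine RosenthalAux.seqChoice (α := ℕ)
        (P := fun k n => n ∈ M' ∧ (Even k → Q < f (x n)) ∧ (¬ Even k → f (x n) < P))
        (R := fun _ a b => a < b) ?_ ?_
      · obtain ⟨n, hn⟩ := hAinf.nonempty
        exact ⟨n, hn.1, fun _ => hn.2, fun hc => absurd Even.zero hc⟩
      · intro k n _
        by_cases hek : Even (k + 1)
        · obtain ⟨b, hb, hlt⟩ := RosenthalAux.infGt hAinf n
          exact ⟨b, ⟨hb.1, fun _ => hb.2, fun hc => absurd hek hc⟩, hlt⟩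
        · obtain ⟨b, hb, hlt⟩ := RosenthalAux.infGt hBinf n
          exact ⟨b, ⟨hb.1, fun hc => absurd hc hek, fun _ => hb.2⟩, hlt⟩
    obtain ⟨u, huP, husucc⟩ := hint
    have humono : StrictMono u := strictMono_nat_of_lt_succ husucc
    obtain ⟨t, ht1, ht2, ht3⟩ := hM'bad (Set.range u)
      (by rintro _ ⟨k, rfl⟩; exact (huP k).1)
      (Set.infinite_range_of_injective humono.injective)
    apply ht3
    refine ⟨f, hf, ?_⟩
    intro n hn
    obtain ⟨i, rfl⟩ := ht1 (Finset.mem_coe.mpr hn)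
    have hrank : (t.filter (· < u i)).card = i := by
      have heq : t.filter (· < u i) = (Finset.range i).image u := by
        ext y
        simp only [Finset.mem_filter, Finset.mem_image, Finset.mem_range]
        constructor
        · rintro ⟨hyt, hylt⟩
          obtain ⟨j, rfl⟩ := ht1 (Finset.mem_coe.mpr hyt)
          exact ⟨j, humono.lt_iff_lt.mp hylt, rfl⟩
        · rintro ⟨j, hji, rfl⟩
          refine ⟨?_, humono hji⟩
          by_contra hc
          have hlt := ht2 (u j) ⟨j, rfl⟩ hc (u i) hn
          exact absurd (humono hji) (by omega)
      rw [heq, Finset.card_image_of_injective _ humono.injective, Finset.card_range]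
    rw [hrank]
    exact ⟨(huP i).2.1, (huP i).2.2⟩
end

section
/- Let X be a real Banach space, M ⊆ X a bounded set and ε > 0. If M contains an ℓ₁-sequence with constant ε, then M is not ε'-weakly precompact for any 0 ≤ ε' < 2ε. -/
open Filter Topology

/-!
Pass to the subsequence `(x_{φ k})` on which `δ ≤ ε'`; it is still an `ℓ₁`-sequence with
constant `ε`. The `ℓ₁` estimate makes the sequence linearly independent and shows that the
functional `x_{φ k} ↦ (-1)^k ε` on its span has norm at most `1`, so by Hahn–Banach it
extends to some `x*` in the unit ball of the dual. Then
`limsup x*(x_{φ k}) − liminf x*(x_{φ k}) ≥ 2ε > ε'`.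
-/

namespace IsL1SeqWith

variable {E : Type*} [NormedAddCommGroup E] [NormedSpace ℝ E] {c : ℝ} {x : ℕ → E}

lemma mul_sum_abs_le_norm_sum (h : IsL1SeqWith c x) (s : Finset ℕ) (a : ℕ → ℝ) :
    c * ∑ n ∈ s, |a n| ≤ ‖∑ n ∈ s, a n • x n‖ := by
  obtain ⟨m, hm⟩ := s.exists_nat_subset_range
  simpa only [apply_ite, abs_zero, ite_smul, zero_smul, Finset.sum_ite_mem,
    Finset.inter_eq_right.2 hm] using h.2 m fun n => if n ∈ s then a n else 0

lemma comp_injective (h : IsL1SeqWith c x) {φ : ℕ → ℕ} (hφ : φ.Injective) :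
    IsL1SeqWith c (x ∘ φ) := by
  refine ⟨h.1.subset (Set.range_comp_subset_range φ x), fun m a => ?_⟩
  set b := Function.extend φ a 0
  have hb : ∀ n, b (φ n) = a n := hφ.extend_apply a 0
  calc c * ∑ n ∈ Finset.range m, |a n|
      = c * ∑ j ∈ (Finset.range m).image φ, |b j| := by
        rw [Finset.sum_image hφ.injOn]; simp only [hb]
    _ ≤ ‖∑ j ∈ (Finset.range m).image φ, b j • x j‖ := h.mul_sum_abs_le_norm_sum _ b
    _ = ‖∑ n ∈ Finset.range m, a n • (x ∘ φ) n‖ := by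
        rw [Finset.sum_image hφ.injOn]; simp only [hb, Function.comp_apply]

lemma linearIndependent (h : IsL1SeqWith c x) (hc : 0 < c) : LinearIndependent ℝ x := by
  refine linearIndependent_iff'.2 fun s a hsum i hi => abs_nonpos_iff.1 ?_
  have hle := h.mul_sum_abs_le_norm_sum s a
  rw [hsum, norm_zero] at hle
  calc |a i| ≤ ∑ n ∈ s, |a n| := Finset.single_le_sum (fun n _ => abs_nonneg (a n)) hi
    _ ≤ 0 := nonpos_of_mul_nonpos_right hle hc

lemma exists_norm_le_one_apply_eq (h : IsL1SeqWith c x) (hc : 0 < c) (b : ℕ → ℝ)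
    (hb : ∀ n, |b n| ≤ c) : ∃ f : E →L[ℝ] ℝ, ‖f‖ ≤ 1 ∧ ∀ n, f (x n) = b n := by
  have hli := h.linearIndependent hc
  let p := Submodule.span ℝ (Set.range x)
  let f : p →ₗ[ℝ] ℝ := Finsupp.linearCombination ℝ b ∘ₗ hli.repr
  have hf : ∀ v : p, ‖f v‖ ≤ 1 * ‖v‖ := by
    intro v
    set l := hli.repr v
    have hv : (v : E) = ∑ n ∈ l.support, l n • x n := by
      rw [← hli.linearCombination_repr v, Finsupp.linearCombination_apply, Finsupp.sum]
    have hfv : f v = ∑ n ∈ l.support, l n * b n := by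
      simp only [f, LinearMap.comp_apply, Finsupp.linearCombination_apply, Finsupp.sum,
        smul_eq_mul, l]
    calc ‖f v‖ ≤ ∑ n ∈ l.support, |l n| * |b n| := by
          rw [hfv]
          simpa only [Real.norm_eq_abs, abs_mul] using norm_sum_le l.support fun n => l n * b n
      _ ≤ ∑ n ∈ l.support, |l n| * c := by gcongr with n; exact hb n
      _ ≤ 1 * ‖v‖ := by
          rw [← Finset.sum_mul, mul_comm, one_mul, ← Submodule.norm_coe v, hv]
          exact h.mul_sum_abs_le_norm_sum _ _
  obtain ⟨g, hgf, hgn⟩ := exists_extension_norm_eq p (f.mkContinuous 1 hf)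
  refine ⟨g, hgn ▸ f.mkContinuous_norm_le zero_le_one hf, fun n => ?_⟩
  have hxn : x n ∈ p := Submodule.subset_span ⟨n, rfl⟩
  rw [show x n = ((⟨x n, hxn⟩ : p) : E) from rfl, hgf]
  simp [f, hli.repr_eq_single n ⟨x n, hxn⟩ rfl]

end IsL1SeqWith

lemma two_mul_le_limsup_sub_liminf_neg_one_pow_mul (c : ℝ) :
    2 * c ≤ limsup (fun k : ℕ => (-1) ^ k * c) atTop
      - liminf (fun k : ℕ => (-1) ^ k * c) atTop := by
  have hbound : ∀ k : ℕ, |(-1) ^ k * c| ≤ |c| := fun k => by simp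
  have hup : c ≤ limsup (fun k : ℕ => (-1) ^ k * c) atTop :=
    le_limsup_of_frequently_le
      (frequently_atTop.2 fun a => ⟨2 * a, by omega, by simp [pow_mul]⟩)
      (isBoundedUnder_of ⟨|c|, fun k => (abs_le.1 (hbound k)).2⟩)
  have hlow : liminf (fun k : ℕ => (-1) ^ k * c) atTop ≤ -c :=
    liminf_le_of_frequently_le
      (frequently_atTop.2 fun a => ⟨2 * a + 1, by omega, by simp [pow_succ, pow_mul]⟩)
      (isBoundedUnder_of ⟨-|c|, fun k => (abs_le.1 (hbound k)).1⟩)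
  linarith

theorem l1_seq_implies_not_weaklyPrecompact_general
    {X : Type*} [NormedAddCommGroup X] [NormedSpace ℝ X]
    (M : Set X) (ε : ℝ) (hε : 0 < ε)
    (x : ℕ → X) (hx : ∀ n, x n ∈ M) (hl1 : IsL1SeqWith ε x) :
    ∀ ε' : ℝ, 0 ≤ ε' → ε' < 2 * ε → ¬ IsWeaklyPrecompactWith ε' M := by
  rintro ε' - hε' ⟨-, hsub⟩
  obtain ⟨φ, hφ, hδ⟩ := hsub x hx
  obtain ⟨f, hf1, hf⟩ := (hl1.comp_injective hφ.injective).exists_norm_le_one_apply_eq hε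
    (fun k => (-1) ^ k * ε) (fun k => by simp [abs_of_pos hε])
  have hδf := hδ f hf1
  simp only [Function.comp_apply] at hf
  simp only [hf] at hδf
  linarith [two_mul_le_limsup_sub_liminf_neg_one_pow_mul ε]

theorem l1_seq_implies_not_weaklyPrecompact
    {X : Type*} [NormedAddCommGroup X] [NormedSpace ℝ X] [CompleteSpace X]
    (M : Set X) (hM : Bornology.IsBounded M) (ε : ℝ) (hε : 0 < ε)
    (x : ℕ → X) (hx : ∀ n, x n ∈ M) (hl1 : IsL1SeqWith ε x) :
    ∀ ε' : ℝ, 0 ≤ ε' → ε' < 2 * ε → ¬ IsWeaklyPrecompactWith ε' M :=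
  l1_seq_implies_not_weaklyPrecompact_general M ε hε x hx hl1
end

section
/- Let X be a real Banach space. If X contains a closed linear subspace isomorphic (as a topological vector space, via a continuous linear isomorphism) to ℓ₁, then the closed unit ball B_X of X is not ε-weakly precompact for any 0 ≤ ε < 2. -/
open Filter Topology

set_option synthInstance.maxHeartbeats 1000000
set_option maxHeartbeats 1000000

noncomputable section
namespace L1WPC

/-- Absolute sum of the coefficients of a finitely supported function. -/
def Ssum (a : ℕ →₀ ℝ) : ℝ := ∑ n ∈ a.support, |a n|

lemma Ssum_nonneg (a : ℕ →₀ ℝ) : 0 ≤ Ssum a :=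
  Finset.sum_nonneg fun _ _ => abs_nonneg _

lemma Ssum_eq_sum {a : ℕ →₀ ℝ} {t : Finset ℕ} (h : a.support ⊆ t) :
    Ssum a = ∑ n ∈ t, |a n| := by
  refine Finset.sum_subset h fun n _ hn => ?_
  simp [Finsupp.notMem_support_iff.1 hn]

lemma Ssum_smul (c : ℝ) (a : ℕ →₀ ℝ) : Ssum (c • a) = |c| * Ssum a := by
  rw [Ssum_eq_sum (Finsupp.support_smul (b := c) (g := a)), Ssum, Finset.mul_sum]
  refine Finset.sum_congr rfl fun n _ => ?_
  simp [abs_mul]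

lemma Ssum_add_of_disjoint {a b : ℕ →₀ ℝ} (h : Disjoint a.support b.support) :
    Ssum (a + b) = Ssum a + Ssum b := by
  rw [Ssum_eq_sum (t := a.support ∪ b.support) Finsupp.support_add,
    Finset.sum_union h, Ssum, Ssum]
  congr 1
  · refine Finset.sum_congr rfl fun n hn => ?_
    have hb : b n = 0 := Finsupp.notMem_support_iff.1 (Finset.disjoint_left.1 h hn)
    simp [hb]
  · refine Finset.sum_congr rfl fun n hn => ?_
    have ha : a n = 0 := Finsupp.notMem_support_iff.1 (Finset.disjoint_right.1 h hn)
    simp [ha]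

lemma Ssum_pos {a : ℕ →₀ ℝ} (h : a ≠ 0) : 0 < Ssum a := by
  obtain ⟨n, hn⟩ := Finsupp.support_nonempty_iff.2 h
  have h1 : 0 < |a n| := abs_pos.2 (Finsupp.mem_support_iff.1 hn)
  exact lt_of_lt_of_le h1 (Finset.single_le_sum (fun i _ => abs_nonneg (a i)) hn)

lemma eq_zero_of_Ssum_le {a : ℕ →₀ ℝ} (h : Ssum a ≤ 0) : a = 0 := by
  by_contra hne
  exact absurd h (not_le.2 (Ssum_pos hne))

lemma Ssum_single (n : ℕ) (c : ℝ) : Ssum (Finsupp.single n c) = |c| := by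
  rcases eq_or_ne c 0 with rfl | hc
  · simp [Ssum]
  · rw [Ssum, Finsupp.support_single_ne_zero n hc]
    simp

lemma Ssum_finset_sum {ι : Type*} (s : Finset ι) (g : ι → (ℕ →₀ ℝ))
    (h : ∀ i ∈ s, ∀ j ∈ s, i ≠ j → Disjoint (g i).support (g j).support) :
    Ssum (∑ i ∈ s, g i) = ∑ i ∈ s, Ssum (g i) := by
  induction s using Finset.cons_induction with
  | empty => simp [Ssum]
  | cons i s his ih =>
    rw [Finset.sum_cons, Finset.sum_cons,
      Ssum_add_of_disjoint, ih (fun p hp q hq hpq =>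
        h p (Finset.mem_cons_of_mem hp) q (Finset.mem_cons_of_mem hq) hpq)]
    refine Finset.disjoint_left.2 fun n hn hn' => ?_
    have := Finsupp.mem_support_finset_sum n hn'
    obtain ⟨j, hj, hnj⟩ := this
    have hij : i ≠ j := fun e => his (e ▸ hj)
    exact Finset.disjoint_left.1
      (h i (Finset.mem_cons_self i s) j (Finset.mem_cons_of_mem hj) hij) hn hnj


lemma Ssum_zero : Ssum (0 : ℕ →₀ ℝ) = 0 := by simp [Ssum]

variable {X : Type*} [NormedAddCommGroup X] [NormedSpace ℝ X]

lemma abs_lincomb_le (y : ℕ → ℝ) (r : ℝ) (hr : 0 ≤ r) (hy : ∀ k, |y k| ≤ r)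
    (b : ℕ →₀ ℝ) : |Finsupp.linearCombination ℝ y b| ≤ r * Ssum b := by
  rw [Finsupp.linearCombination_apply, Finsupp.sum, Ssum, Finset.mul_sum]
  refine (Finset.abs_sum_le_sum_abs _ _).trans (Finset.sum_le_sum fun n _ => ?_)
  rw [smul_eq_mul, abs_mul, mul_comm (r : ℝ)]
  exact mul_le_mul_of_nonneg_left (hy n) (abs_nonneg _)

lemma exists_functional (v : ℕ → X) (r : ℝ) (hr : 0 < r) (s : ℕ → ℝ)
    (hs : ∀ k, |s k| ≤ 1)
    (hlow : ∀ b : ℕ →₀ ℝ, r * Ssum b ≤ ‖Finsupp.linearCombination ℝ v b‖) :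
    ∃ f : X →L[ℝ] ℝ, ‖f‖ ≤ 1 ∧ ∀ k, f (v k) = r * s k := by
  set p : (ℕ →₀ ℝ) →ₗ[ℝ] X := Finsupp.linearCombination ℝ v with hp
  set q : (ℕ →₀ ℝ) →ₗ[ℝ] ℝ := Finsupp.linearCombination ℝ (fun k => r * s k) with hq
  have hqb : ∀ b, |q b| ≤ r * Ssum b := by
    intro b
    refine abs_lincomb_le _ r hr.le (fun k => ?_) b
    rw [abs_mul, abs_of_pos hr]
    calc r * |s k| ≤ r * 1 := mul_le_mul_of_nonneg_left (hs k) hr.le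
    _ = r := mul_one r
  have hqle : ∀ b, |q b| ≤ ‖p b‖ := fun b => (hqb b).trans (hlow b)
  have hker : LinearMap.ker p ≤ LinearMap.ker q := by
    intro b hb
    rw [LinearMap.mem_ker] at hb ⊢
    have := hqle b
    rw [hb, norm_zero] at this
    exact abs_nonpos_iff.1 this
  set f0 : LinearMap.range p →ₗ[ℝ] ℝ :=
    ((LinearMap.ker p).liftQ q hker).comp p.quotKerEquivRange.symm.toLinearMap with hf0
  have hf0app : ∀ b : ℕ →₀ ℝ, f0 ⟨p b, LinearMap.mem_range_self p b⟩ = q b := by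
    intro b
    rw [hf0]
    simp [LinearMap.quotKerEquivRange_symm_apply_image, Submodule.liftQ_apply]
  have hbound : ∀ w : LinearMap.range p, ‖f0 w‖ ≤ 1 * ‖w‖ := by
    rintro ⟨y, b, rfl⟩
    rw [one_mul]
    have : (⟨p b, LinearMap.mem_range_self p b⟩ : LinearMap.range p) = ⟨p b, ⟨b, rfl⟩⟩ := rfl
    rw [← this, hf0app, Real.norm_eq_abs]
    exact (hqle b).trans_eq ((Submodule.norm_coe (⟨p b, ⟨b, rfl⟩⟩ : LinearMap.range p)).symm)
  set f0c : (LinearMap.range p : Submodule ℝ X) →L[ℝ] ℝ := f0.mkContinuous 1 hbound with hf0c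
  obtain ⟨g, hgext, hgnorm⟩ := exists_extension_norm_eq
    (LinearMap.range p : Submodule ℝ X) f0c
  refine ⟨g, ?_, ?_⟩
  · rw [hgnorm]
    exact f0.mkContinuous_norm_le zero_le_one hbound
  · intro k
    have hmem : v k = p (Finsupp.single k 1) := by
      simp [hp]
    have h2 := hgext ⟨p (Finsupp.single k 1), LinearMap.mem_range_self p _⟩
    have h3 : g (v k) = f0c ⟨p (Finsupp.single k 1), LinearMap.mem_range_self p _⟩ := by
      rw [← h2]; exact congrArg g hmem
    rw [h3]
    show f0 _ = _
    rw [hf0app]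
    simp [hq]

lemma frequently_even : ∃ᶠ k : ℕ in atTop, ∃ j, k = 2 * j :=
  Filter.frequently_atTop.2 fun N => ⟨2 * N, by omega, N, rfl⟩

lemma alt_limsup (r : ℝ) (hr : 0 ≤ r) :
    r ≤ Filter.limsup (fun k : ℕ => r * (-1 : ℝ) ^ k) Filter.atTop := by
  refine Filter.le_limsup_of_frequently_le ?_ ?_
  · refine Filter.frequently_atTop.2 fun N => ⟨2 * N, by omega, ?_⟩
    rw [pow_mul]
    norm_num
  · refine ⟨r, Filter.eventually_map.2 (Filter.Eventually.of_forall fun k => ?_)⟩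
    calc r * (-1:ℝ)^k ≤ |r * (-1:ℝ)^k| := le_abs_self _
    _ = r := by rw [abs_mul, abs_pow, abs_neg, abs_one, one_pow, mul_one, abs_of_nonneg hr]

lemma alt_liminf (r : ℝ) (hr : 0 ≤ r) :
    Filter.liminf (fun k : ℕ => r * (-1 : ℝ) ^ k) Filter.atTop ≤ -r := by
  refine Filter.liminf_le_of_frequently_le ?_ ?_
  · refine Filter.frequently_atTop.2 fun N => ⟨2 * N + 1, by omega, ?_⟩
    rw [pow_succ, pow_mul]
    norm_num
  · refine ⟨-r, Filter.eventually_map.2 (Filter.Eventually.of_forall fun k => ?_)⟩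
    calc -r = -|r * (-1:ℝ)^k| := by
            rw [abs_mul, abs_pow, abs_neg, abs_one, one_pow, mul_one, abs_of_nonneg hr]
    _ ≤ r * (-1:ℝ)^k := neg_abs_le _


lemma james (x : ℕ → X) (c C : ℝ) (hc : 0 < c)
    (hlow : ∀ a : ℕ →₀ ℝ, c * Ssum a ≤ ‖Finsupp.linearCombination ℝ x a‖)
    (hC : ∀ n, ‖x n‖ ≤ C) (t : ℝ) (ht0 : 0 ≤ t) (ht : t < 1) :
    ∃ (v : ℕ → X) (r : ℝ), t < r ∧ (∀ k, ‖v k‖ = 1) ∧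
      ∀ b : ℕ →₀ ℝ, r * Ssum b ≤ ‖Finsupp.linearCombination ℝ v b‖ := by
  set lc : (ℕ →₀ ℝ) →ₗ[ℝ] X := Finsupp.linearCombination ℝ x with hlc
  set Sset : ℕ → Set ℝ := fun m =>
    {r | ∀ a : ℕ →₀ ℝ, (∀ n ∈ a.support, m ≤ n) → r * Ssum a ≤ ‖lc a‖} with hSset
  have hcmem : ∀ m, c ∈ Sset m := fun m a _ => hlow a
  have hub : ∀ m, ∀ r ∈ Sset m, r ≤ ‖x m‖ := by
    intro m r hr
    have := hr (Finsupp.single m 1) (by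
      intro n hn
      rw [Finsupp.support_single_ne_zero m one_ne_zero, Finset.mem_singleton] at hn
      omega)
    rw [Ssum_single, abs_one, mul_one] at this
    simpa [hlc] using this
  have hbdd : ∀ m, BddAbove (Sset m) := fun m => ⟨‖x m‖, fun r hr => hub m r hr⟩
  set lam : ℕ → ℝ := fun m => sSup (Sset m) with hlam
  have hlam_mem : ∀ m, ∀ a : ℕ →₀ ℝ, (∀ n ∈ a.support, m ≤ n) →
      lam m * Ssum a ≤ ‖lc a‖ := by
    intro m a ha
    rcases le_or_gt (Ssum a) 0 with hS | hS
    · have h0 : a = 0 := eq_zero_of_Ssum_le hS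
      simp [h0, Ssum_zero]
    · rw [← le_div_iff₀ hS]
      refine csSup_le ⟨c, hcmem m⟩ fun r hr => ?_
      rw [le_div_iff₀ hS]
      exact hr a ha
  have hlam_ge : ∀ m, c ≤ lam m := fun m => le_csSup (hbdd m) (hcmem m)
  have hlam_mono : Monotone lam := by
    intro m m' hmm
    refine csSup_le_csSup (hbdd m') ⟨c, hcmem m⟩ fun r hr a ha => ?_
    exact hr a fun n hn => le_trans hmm (ha n hn)
  have hlamC : ∀ m, lam m ≤ C := fun m =>
    csSup_le ⟨c, hcmem m⟩ fun r hr => (hub m r hr).trans (hC m)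
  set L : ℝ := sSup (Set.range lam) with hL
  have hLbdd : BddAbove (Set.range lam) := ⟨C, by rintro _ ⟨m, rfl⟩; exact hlamC m⟩
  have hlamL : ∀ m, lam m ≤ L := fun m => le_csSup hLbdd ⟨m, rfl⟩
  have hLpos : 0 < L := lt_of_lt_of_le hc ((hlam_ge 0).trans (hlamL 0))
  set η : ℝ := L * (1 - t) / 3 with hη
  have hηpos : 0 < η := by
    rw [hη]
    apply div_pos (mul_pos hLpos (by linarith)) (by norm_num)
  obtain ⟨_, ⟨m₀, rfl⟩, hm₀⟩ := exists_lt_of_lt_csSup (Set.range_nonempty lam)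
    (show L - η < L by linarith)
  -- blocks
  have hex : ∀ m, ∃ a : ℕ →₀ ℝ, (∀ n ∈ a.support, m ≤ n) ∧ a ≠ 0 ∧
      ‖lc a‖ < (lam m + η) * Ssum a := by
    intro m
    have hnot : lam m + η ∉ Sset m := fun hmem =>
      absurd (le_csSup (hbdd m) hmem) (by linarith)
    rw [hSset, Set.mem_setOf_eq] at hnot
    push_neg at hnot
    obtain ⟨a, ha, hlt⟩ := hnot
    refine ⟨a, ha, ?_, hlt⟩
    rintro rfl
    rw [Ssum_zero, mul_zero] at hlt
    simp at hlt
  choose F hFsupp hFne hFnorm using hex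
  set msq : ℕ → ℕ := fun k => Nat.rec m₀ (fun _ mk => (F mk).support.sup id + 1) k with hmsq
  have hmsq_succ : ∀ k, msq (k + 1) = (F (msq k)).support.sup id + 1 := fun k => rfl
  set a : ℕ → (ℕ →₀ ℝ) := fun k => F (msq k) with ha
  have hsupp_lb : ∀ k, ∀ n ∈ (a k).support, msq k ≤ n := fun k => hFsupp (msq k)
  have hsupp_ub : ∀ k, ∀ n ∈ (a k).support, n < msq (k + 1) := by
    intro k n hn
    rw [hmsq_succ]
    exact Nat.lt_succ_of_le (Finset.le_sup (f := id) hn)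
  have hmsq_lt : ∀ k, msq k < msq (k + 1) := by
    intro k
    obtain ⟨n, hn⟩ := Finsupp.support_nonempty_iff.2 (hFne (msq k))
    exact lt_of_le_of_lt (hsupp_lb k n hn) (hsupp_ub k n hn)
  have hmsq_mono : StrictMono msq := strictMono_nat_of_lt_succ hmsq_lt
  have hmsq_ge : ∀ k, m₀ ≤ msq k := fun k => by
    exact hmsq_mono.monotone (Nat.zero_le k)
  set u : ℕ → X := fun k => lc (a k) with hu
  have hSpos : ∀ k, 0 < Ssum (a k) := fun k => Ssum_pos (hFne (msq k))
  have hu_lt : ∀ k, ‖u k‖ < (L + η) * Ssum (a k) := by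
    intro k
    refine lt_of_lt_of_le (hFnorm (msq k)) ?_
    exact mul_le_mul_of_nonneg_right (by linarith [hlamL (msq k)]) (hSpos k).le
  have hu_pos : ∀ k, 0 < ‖u k‖ := fun k =>
    lt_of_lt_of_le (mul_pos hc (hSpos k)) (hlow (a k))
  set v : ℕ → X := fun k => ‖u k‖⁻¹ • u k with hv
  set r : ℝ := (L - η) / (L + η) with hr
  have hLη : 0 < L + η := by linarith
  refine ⟨v, r, ?_, ?_, ?_⟩
  · rw [hr, lt_div_iff₀ hLη, hη]
    nlinarith [mul_pos hLpos (mul_pos (show (0:ℝ) < 1 - t by linarith)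
      (show (0:ℝ) < 2 - t by linarith))]
  · intro k
    rw [hv]
    simp only [norm_smul, norm_inv, norm_norm]
    exact inv_mul_cancel₀ (hu_pos k).ne'
  · intro b
    -- disjointness of supports
    have hdisj : ∀ i j : ℕ, i ≠ j → Disjoint (a i).support (a j).support := by
      have key : ∀ i j : ℕ, i < j → Disjoint (a i).support (a j).support := by
        intro i j hij
        refine Finset.disjoint_left.2 fun n hni hnj => ?_
        have h1 := hsupp_ub i n hni
        have h2 := hsupp_lb j n hnj
        have h3 : msq (i + 1) ≤ msq j := hmsq_mono.monotone hij
        omega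
      intro i j hij
      rcases lt_or_gt_of_ne hij with h | h
      · exact key i j h
      · exact (key j i h).symm
    set A : ℕ →₀ ℝ := ∑ k ∈ b.support, (b k * ‖u k‖⁻¹) • a k with hA
    have hlcA : lc A = Finsupp.linearCombination ℝ v b := by
      rw [hA, map_sum, Finsupp.linearCombination_apply, Finsupp.sum]
      refine Finset.sum_congr rfl fun k _ => ?_
      rw [map_smul, hv]
      simp [mul_smul]
      rfl
    have hSA : Ssum A = ∑ k ∈ b.support, |b k| * ‖u k‖⁻¹ * Ssum (a k) := by
      rw [hA, Ssum_finset_sum _ _ (fun i _ j _ hij =>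
        Finset.disjoint_left.2 fun n hn hn' =>
          Finset.disjoint_left.1 (hdisj i j hij)
            (Finsupp.support_smul hn) (Finsupp.support_smul hn'))]
      refine Finset.sum_congr rfl fun k _ => ?_
      rw [Ssum_smul, abs_mul, abs_inv, abs_norm]
    have hAsupp : ∀ n ∈ A.support, m₀ ≤ n := by
      intro n hn
      obtain ⟨k, _, hnk⟩ := Finsupp.mem_support_finset_sum n hn
      exact le_trans (hmsq_ge k) (hsupp_lb k n (Finsupp.support_smul hnk))
    have h1 : lam m₀ * Ssum A ≤ ‖lc A‖ := hlam_mem m₀ A hAsupp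
    have hkey : ∀ k, (L + η)⁻¹ ≤ ‖u k‖⁻¹ * Ssum (a k) := by
      intro k
      rw [← div_eq_inv_mul, le_div_iff₀ (hu_pos k), inv_mul_le_iff₀ hLη]
      exact (hu_lt k).le
    have hS_ge : Ssum b * (L + η)⁻¹ ≤ Ssum A := by
      rw [hSA, Ssum, Finset.sum_mul]
      refine Finset.sum_le_sum fun k _ => ?_
      rw [mul_assoc]
      exact mul_le_mul_of_nonneg_left (hkey k) (abs_nonneg _)
    have hLmη : 0 ≤ L - η := by
      rw [hη]; nlinarith
    calc r * Ssum b = (L - η) * (Ssum b * (L + η)⁻¹) := by rw [hr]; ring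
    _ ≤ (L - η) * Ssum A := mul_le_mul_of_nonneg_left hS_ge hLmη
    _ ≤ lam m₀ * Ssum A := mul_le_mul_of_nonneg_right hm₀.le (Ssum_nonneg A)
    _ ≤ ‖lc A‖ := h1
    _ = ‖Finsupp.linearCombination ℝ v b‖ := by rw [hlcA]


/-- transfer the lower `ℓ¹` bound along an injective map -/
lemma lower_comp (v : ℕ → X) (r : ℝ) (φ : ℕ → ℕ) (hφ : Function.Injective φ)
    (hlow : ∀ b : ℕ →₀ ℝ, r * Ssum b ≤ ‖Finsupp.linearCombination ℝ v b‖) :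
    ∀ b : ℕ →₀ ℝ, r * Ssum b ≤ ‖Finsupp.linearCombination ℝ (v ∘ φ) b‖ := by
  intro b
  have h : Finsupp.linearCombination ℝ (v ∘ φ) b
      = Finsupp.linearCombination ℝ v (Finsupp.embDomain ⟨φ, hφ⟩ b) :=
    (Finsupp.linearCombination_embDomain (R := ℝ) (v' := v) ⟨φ, hφ⟩ b).symm
  rw [h]
  have hS : Ssum (Finsupp.embDomain ⟨φ, hφ⟩ b) = Ssum b := by
    rw [Ssum, Ssum, Finsupp.support_embDomain, Finset.sum_map]
    refine Finset.sum_congr rfl fun n hn => ?_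
    rw [Finsupp.embDomain_apply_self]
  rw [← hS]
  exact hlow _

end L1WPC
end

open L1WPC in
theorem ball_not_weaklyPrecompact_of_contains_l1
    {X : Type*} [NormedAddCommGroup X] [NormedSpace ℝ X] [CompleteSpace X]
    (Y : Submodule ℝ X) (hY : IsClosed (Y : Set X))
    (hiso : Nonempty (lp (fun _ : ℕ => ℝ) 1 ≃L[ℝ] Y)) :
    ∀ ε : ℝ, 0 ≤ ε → ε < 2 →
      ¬ IsWeaklyPrecompactWith ε (Metric.closedBall (0 : X) 1) := by
  intro ε hε0 hε2 hwpc
  obtain ⟨T⟩ := hiso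
  set x : ℕ → X := fun n => ((T (lp.single 1 n (1 : ℝ)) : Y) : X) with hx
  set K : ℝ := ‖(T.symm : Y →L[ℝ] lp (fun _ : ℕ => ℝ) 1)‖ with hK
  have hK0 : 0 ≤ K := hK ▸ ContinuousLinearMap.opNorm_nonneg _
  have hp1 : (0:ℝ) < (1 : ENNReal).toReal := by norm_num
  -- ζ a and its norm
  have hζnorm : ∀ a : ℕ →₀ ℝ,
      ‖∑ n ∈ a.support, lp.single 1 n (a n)‖ = Ssum a := by
    intro a
    have := lp.norm_sum_single (p := 1) (E := fun _ : ℕ => ℝ) hp1 (fun n => a n) a.support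
    rw [ENNReal.toReal_one] at this
    simp only [Real.rpow_one] at this
    rw [this, Ssum]
    exact Finset.sum_congr rfl fun n _ => (Real.norm_eq_abs _)
  have hlc : ∀ a : ℕ →₀ ℝ, Finsupp.linearCombination ℝ x a
      = ((T (∑ n ∈ a.support, lp.single 1 n (a n)) : Y) : X) := by
    intro a
    rw [Finsupp.linearCombination_apply, Finsupp.sum, map_sum, AddSubmonoidClass.coe_finset_sum]
    refine Finset.sum_congr rfl fun n _ => ?_
    have h1 : (lp.single 1 n (a n) : lp (fun _ : ℕ => ℝ) 1)
        = a n • (lp.single 1 n (1 : ℝ) : lp (fun _ : ℕ => ℝ) 1) := by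
      rw [← lp.single_smul, smul_eq_mul, mul_one]
    rw [h1, map_smul, hx]
    simp
  have hlow : ∀ a : ℕ →₀ ℝ,
      (1 + K)⁻¹ * Ssum a ≤ ‖Finsupp.linearCombination ℝ x a‖ := by
    intro a
    set ζ : lp (fun _ : ℕ => ℝ) 1 := ∑ n ∈ a.support, lp.single 1 n (a n) with hζ
    have h1 : Ssum a ≤ (1 + K) * ‖Finsupp.linearCombination ℝ x a‖ := by
      have h2 : Ssum a = ‖ζ‖ := (hζnorm a).symm
      have h3 : ‖ζ‖ = ‖T.symm (T ζ)‖ := by rw [T.symm_apply_apply]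
      have h4 : ‖T.symm (T ζ)‖ ≤ K * ‖T ζ‖ := by
        rw [hK]
        exact (T.symm : Y →L[ℝ] lp (fun _ : ℕ => ℝ) 1).le_opNorm (T ζ)
      have h5 : ‖T ζ‖ = ‖Finsupp.linearCombination ℝ x a‖ := by
        rw [hlc a, Submodule.norm_coe]
      rw [h2, h3, ← h5]
      nlinarith [norm_nonneg (T ζ), h4]
    have h6 : (0:ℝ) < 1 + K := by linarith
    rw [inv_mul_le_iff₀ h6]
    exact h1
  have hC : ∀ n, ‖x n‖ ≤ ‖(T : lp (fun _ : ℕ => ℝ) 1 →L[ℝ] Y)‖ := by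
    intro n
    rw [hx]
    have h1 : ‖((T (lp.single 1 n (1:ℝ)) : Y) : X)‖ = ‖T (lp.single 1 n (1:ℝ))‖ :=
      Submodule.norm_coe _
    rw [h1]
    have h2 := (T : lp (fun _ : ℕ => ℝ) 1 →L[ℝ] Y).le_opNorm
      (lp.single 1 n (1:ℝ) : lp (fun _ : ℕ => ℝ) 1)
    have h3 : ‖(lp.single 1 n (1:ℝ) : lp (fun _ : ℕ => ℝ) 1)‖ = 1 := by
      have := lp.norm_single (p := 1) (E := fun _ : ℕ => ℝ) zero_lt_one n (1:ℝ)
      simpa using this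
    rw [h3, mul_one] at h2
    exact h2
  -- apply James
  have hcpos : (0:ℝ) < (1 + K)⁻¹ := by positivity
  obtain ⟨v, r, hrt, hvnorm, hvlow⟩ := james x ((1+K)⁻¹) _ hcpos hlow hC (ε/2)
    (by linarith) (by linarith)
  have hr0 : 0 < r := lt_of_le_of_lt (by linarith) hrt
  -- v lies in the closed unit ball
  obtain ⟨φ, hφ, hδ⟩ := hwpc.2 v (fun k => by
    rw [Metric.mem_closedBall, dist_zero_right, hvnorm k])
  obtain ⟨f, hf1, hfv⟩ := exists_functional (v ∘ φ) r hr0 (fun k => (-1:ℝ)^k)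
    (fun k => by rw [abs_pow, abs_neg, abs_one, one_pow])
    (lower_comp v r φ hφ.injective hvlow)
  have hδf := hδ f hf1
  have heq : (fun k => f (v (φ k))) = fun k : ℕ => r * (-1:ℝ)^k := by
    funext k
    exact hfv k
  rw [heq] at hδf
  have h7 := alt_limsup r hr0.le
  have h8 := alt_liminf r hr0.le
  linarith
end

section
/- Let K be a compact Hausdorff topological space, μ a regular Borel probability measure on K, and ε ≥ 0. Let i_μ : C(K) → L¹(μ) be the continuous linear map sending each continuous real-valued function on K to its equivalence class in L¹(μ). If M ⊆ C(K) is ε-weakly precompact, then i_μ(M) is ε-precompact in L¹(μ). -/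
open Filter Topology MeasureTheory

/-- `ca((x_n)) ≤ ε`, where `ca((x_n)) := inf_m sup_{n,n' ≥ m} ‖x_n − x_{n'}‖`. -/
def CaLE {E : Type*} [NormedAddCommGroup E] (x : ℕ → E) (ε : ℝ) : Prop :=
  ∀ η : ℝ, 0 < η → ∃ m : ℕ, ∀ n ≥ m, ∀ n' ≥ m, ‖x n - x n'‖ ≤ ε + η

/-- A set `M` is `ε`-precompact if it is bounded and every sequence in `M`
admits a subsequence `(x_{n_k})` with `ca((x_{n_k})) ≤ ε`. -/
def IsPrecompactWith {E : Type*} [NormedAddCommGroup E] (ε : ℝ) (M : Set E) : Prop :=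
  Bornology.IsBounded M ∧
    ∀ x : ℕ → E, (∀ n, x n ∈ M) →
      ∃ φ : ℕ → ℕ, StrictMono φ ∧ CaLE (fun k => x (φ k)) ε

open scoped ENNReal NNReal in
lemma osc_of_limsup_sub_liminf {a : ℕ → ℝ} {C ε δ : ℝ}
    (hC : ∀ k, |a k| ≤ C)
    (h : Filter.limsup a Filter.atTop - Filter.liminf a Filter.atTop ≤ ε)
    (hδ : 0 < δ) : ∃ m, ∀ n ≥ m, ∀ n' ≥ m, |a n - a n'| ≤ ε + δ := by
  have hub : IsBoundedUnder (· ≤ ·) atTop a :=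
    isBoundedUnder_of ⟨C, fun k => (abs_le.mp (hC k)).2⟩
  have hlb : IsBoundedUnder (· ≥ ·) atTop a :=
    isBoundedUnder_of ⟨-C, fun k => (abs_le.mp (hC k)).1⟩
  set L := Filter.limsup a Filter.atTop
  set l := Filter.liminf a Filter.atTop
  have h1 : ∀ᶠ n in atTop, a n < L + δ/2 :=
    eventually_lt_of_limsup_lt (by linarith) hub
  have h2 : ∀ᶠ n in atTop, l - δ/2 < a n :=
    eventually_lt_of_lt_liminf (by linarith) hlb
  obtain ⟨m, hm⟩ := eventually_atTop.mp (h1.and h2)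
  refine ⟨m, fun n hn n' hn' => ?_⟩
  obtain ⟨hn1, hn2⟩ := hm n hn
  obtain ⟨hn1', hn2'⟩ := hm n' hn'
  rw [abs_sub_le_iff]
  constructor <;> linarith

open scoped ENNReal NNReal in
theorem toLp_image_precompact
    {K : Type*} [TopologicalSpace K] [CompactSpace K] [T2Space K]
    [MeasurableSpace K] [BorelSpace K]
    (μ : Measure K) [μ.Regular] [IsProbabilityMeasure μ]
    (ε : ℝ) (hε : 0 ≤ ε) (M : Set C(K, ℝ))
    (hM : IsWeaklyPrecompactWith ε M) :
    IsPrecompactWith ε ((ContinuousMap.toLp 1 μ ℝ) '' M) := by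
  obtain ⟨hMb, hMseq⟩ := hM
  obtain ⟨C, hC⟩ := isBounded_iff_forall_norm_le.mp hMb
  set T : C(K, ℝ) →L[ℝ] Lp ℝ 1 μ := ContinuousMap.toLp 1 μ ℝ with hT
  constructor
  · rw [isBounded_iff_forall_norm_le]
    refine ⟨‖T‖ * C, ?_⟩
    rintro y ⟨f, hf, rfl⟩
    calc ‖T f‖ ≤ ‖T‖ * ‖f‖ := T.le_opNorm f
      _ ≤ ‖T‖ * C := mul_le_mul_of_nonneg_left (hC f hf) (norm_nonneg T)
  · intro y hy
    choose u huM huy using hy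
    obtain ⟨φ, hφ, hδ⟩ := hMseq u huM
    refine ⟨φ, hφ, ?_⟩
    set v : ℕ → C(K, ℝ) := fun k => u (φ k) with hv
    -- oscillation functions
    have habs : ∀ (f : C(K, ℝ)) (t : K), |f t| ≤ ‖f‖ := fun f t => by
      rw [← Real.norm_eq_abs]; exact f.norm_coe_le_norm t
    set g : ℕ → K → ℝ≥0∞ :=
      fun m t => ⨆ n, ⨆ n', edist (v (m + n) t) (v (m + n') t) with hg
    have hmeas : ∀ m, Measurable (g m) := by
      intro m
      exact Measurable.iSup fun n => Measurable.iSup fun n' =>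
        ((v (m + n)).continuous.edist (v (m + n')).continuous).measurable
    have hanti : Antitone g := by
      intro m m' hmm'
      intro t
      refine iSup_le fun n => iSup_le fun n' => ?_
      refine le_trans ?_ (le_iSup _ ((m' - m) + n))
      refine le_trans ?_ (le_iSup _ ((m' - m) + n'))
      rw [show m + ((m' - m) + n) = m' + n by omega,
        show m + ((m' - m) + n') = m' + n' by omega]
    have hfin : ∫⁻ t, g 0 t ∂μ ≠ ⊤ := by
      have hb : ∀ t, g 0 t ≤ ENNReal.ofReal (2 * C) := by
        intro t
        refine iSup_le fun n => iSup_le fun n' => ?_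
        rw [edist_dist, Real.dist_eq]
        refine ENNReal.ofReal_le_ofReal ?_
        have h1 : |v (0 + n) t| ≤ C := (habs _ _).trans (hC _ (huM _))
        have h2 : |v (0 + n') t| ≤ C := (habs _ _).trans (hC _ (huM _))
        calc |v (0 + n) t - v (0 + n') t| ≤ |v (0 + n) t| + |v (0 + n') t| := abs_sub _ _
          _ ≤ 2 * C := by linarith
      have hle : ∫⁻ t, g 0 t ∂μ ≤ ENNReal.ofReal (2 * C) := by
        calc ∫⁻ t, g 0 t ∂μ ≤ ∫⁻ _, ENNReal.ofReal (2 * C) ∂μ := lintegral_mono hb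
          _ = ENNReal.ofReal (2 * C) := by simp
      exact ne_top_of_le_ne_top ENNReal.ofReal_ne_top hle
    intro η hη
    -- pointwise bound on the infimum
    have hpt : ∀ t, ⨅ m, g m t ≤ ENNReal.ofReal (ε + η / 2) := by
      intro t
      have hfnorm : ‖ContinuousMap.evalCLM (R := ℝ) (M := ℝ) t‖ ≤ 1 := by
        refine ContinuousLinearMap.opNorm_le_bound _ zero_le_one fun f => ?_
        rw [one_mul]
        exact f.norm_coe_le_norm t
      have hosc := hδ (ContinuousMap.evalCLM (R := ℝ) (M := ℝ) t) hfnorm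
      have haC : ∀ k, |v k t| ≤ C := fun k => (habs _ _).trans (hC _ (huM _))
      obtain ⟨m, hm⟩ := osc_of_limsup_sub_liminf (a := fun k => v k t) haC hosc (half_pos hη)
      refine iInf_le_of_le m (iSup_le fun n => iSup_le fun n' => ?_)
      rw [edist_dist, Real.dist_eq]
      exact ENNReal.ofReal_le_ofReal (hm (m + n) (Nat.le_add_right _ _) (m + n') (Nat.le_add_right _ _))
    have hkey : ⨅ m, ∫⁻ t, g m t ∂μ < ENNReal.ofReal (ε + η) := by
      rw [← lintegral_iInf hmeas hanti hfin]
      calc ∫⁻ t, ⨅ m, g m t ∂μ ≤ ∫⁻ _, ENNReal.ofReal (ε + η / 2) ∂μ := lintegral_mono hpt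
        _ = ENNReal.ofReal (ε + η / 2) := by simp
        _ < ENNReal.ofReal (ε + η) := by
            rw [ENNReal.ofReal_lt_ofReal_iff (by linarith)]; linarith
    obtain ⟨m, hm⟩ := iInf_lt_iff.mp hkey
    refine ⟨m, fun n hn n' hn' => ?_⟩
    have h1 : y (φ n) - y (φ n') = T (v n - v n') := by
      rw [map_sub, huy (φ n), huy (φ n')]
    rw [h1]
    have h2 : ‖T (v n - v n')‖ = (∫⁻ t, ‖(v n - v n') t‖₊ ∂μ).toReal := by
      rw [Lp.norm_def, eLpNorm_congr_ae (ContinuousMap.coeFn_toLp (p := 1) (μ := μ) (𝕜 := ℝ) (v n - v n')),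
        eLpNorm_one_eq_lintegral_enorm]
      rfl
    rw [h2]
    have h3 : ∫⁻ t, (‖(v n - v n') t‖₊ : ℝ≥0∞) ∂μ ≤ ∫⁻ t, g m t ∂μ := by
      refine lintegral_mono fun t => ?_
      have : ((‖(v n - v n') t‖₊ : ℝ≥0∞)) = edist (v n t) (v n' t) := by
        rw [edist_eq_enorm_sub]
        simp
        rfl
      rw [this]
      refine le_trans ?_ (le_iSup _ (n - m))
      refine le_trans ?_ (le_iSup _ (n' - m))
      rw [show m + (n - m) = n by omega, show m + (n' - m) = n' by omega]
    have h4 : ∫⁻ t, (‖(v n - v n') t‖₊ : ℝ≥0∞) ∂μ ≤ ENNReal.ofReal (ε + η) :=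
      h3.trans hm.le
    calc (∫⁻ t, (‖(v n - v n') t‖₊ : ℝ≥0∞) ∂μ).toReal
        ≤ (ENNReal.ofReal (ε + η)).toReal := ENNReal.toReal_mono ENNReal.ofReal_ne_top h4
      _ = ε + η := ENNReal.toReal_ofReal (by linarith)
end

section
/- Let X be a real Banach space, M ⊆ X a bounded set and ε ≥ 0. If M is ε-relatively weakly compact, then M is 2ε-weakly precompact. -/
open Filter Topology NormedSpace

/-- A bounded set `M` is `ε`-relatively weakly compact if the weak*-closure of `J(M)`
in the bidual is contained in `J(X) + ε B_{X**}`, where `J` is the canonical embedding. -/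
def IsRelWeaklyCompactWith {E : Type*} [NormedAddCommGroup E] [NormedSpace ℝ E]
    (ε : ℝ) (M : Set E) : Prop :=
  Bornology.IsBounded M ∧
    ∀ z : StrongDual ℝ (StrongDual ℝ E),
      StrongDual.toWeakDual z ∈
        closure (StrongDual.toWeakDual '' (inclusionInDoubleDual ℝ E '' M)) →
      ∃ x : E, ‖z - inclusionInDoubleDual ℝ E x‖ ≤ ε

/-!
Along an infinite set `A` of indices let `Δ(A)` be the `δ` of the corresponding subsequence.
`Δ` is monotone and insensitive to finitely many indices, so a diagonal argument shows that either
some subsequence has `δ ≤ 2ε`, or `Δ > 2ε + η` on every infinite subset of some infinite `T`.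
In the second case a finite colouring argument fixes two levels `α < β` with `β - α > 2ε` such
that every infinite `B ⊆ T` is split by a functional of norm `≤ 1`: it is `≥ β` infinitely often
and `≤ α` infinitely often along `B`. A Rosenthal-type construction then gives a subsequence `w`
and functionals `fₙ` of norm `≤ 1` with `fₙ ≤ α` on `w₀, …, wₙ₋₁` and `fₙ ≥ β` on `wₙ, wₙ₊₁, …`.
Let `z` be a weak* cluster point of `J wₖ`, `φ` one of `fₙ`, and `d = ‖z - J x₀‖`. Then
`fₙ(x₀) ≥ z(fₙ) - d ≥ β - d`, so `φ(x₀) ≥ β - d`, while `z(φ) ≤ α`; hence `β - α ≤ 2d`, and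
`ε`-relative weak compactness forces `β - α ≤ 2ε`.
-/

open Set Metric

theorem Set.Infinite.inter_Ici {s : Set ℕ} (hs : s.Infinite) (n : ℕ) : (s ∩ Ici n).Infinite := by
  simpa [sdiff_eq] using hs.sdiff (finite_Iio n)

theorem Set.Infinite.inter_Ioi {s : Set ℕ} (hs : s.Infinite) (n : ℕ) : (s ∩ Ioi n).Infinite := by
  simpa [sdiff_eq] using hs.sdiff (finite_Iic n)

theorem exists_seq_of_forall_exists {α : Type*} {p : α → Prop} {r : ℕ → α → α → Prop} {a : α}
    (ha : p a) (h : ∀ n a, p a → ∃ b, p b ∧ r n a b) :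
    ∃ s : ℕ → α, ∀ n, p (s n) ∧ r n (s n) (s (n + 1)) := by
  choose next hnext using h
  let s : ℕ → {a // p a} := fun n =>
    Nat.rec ⟨a, ha⟩ (fun n b => ⟨next n b b.2, (hnext n b b.2).1⟩) n
  refine ⟨fun n => (s n).1, fun n => ⟨(s n).2, ?_⟩⟩
  exact (hnext n _ (s n).2).2

theorem range_inter_Ici_subset {A : ℕ → Set ℕ} (hA : Antitone A) {d : ℕ → ℕ} (hd : StrictMono d)
    (hdA : ∀ n, d n ∈ A n) (n : ℕ) : range d ∩ Ici (d n) ⊆ A n := by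
  rintro _ ⟨⟨m, rfl⟩, hm⟩
  exact hA (hd.le_iff_le.1 hm) (hdA m)

theorem StrictMono.map_atTop_eq_inf_principal_range {d : ℕ → ℕ} (hd : StrictMono d) :
    map d atTop = atTop ⊓ 𝓟 (range d) := by
  refine le_antisymm (le_inf hd.tendsto_atTop (le_principal_iff.2 range_mem_map)) fun S hS => ?_
  obtain ⟨N, hN⟩ := mem_atTop_sets.1 (mem_map.1 hS)
  refine mem_inf_of_inter (Ici_mem_atTop (d N)) (mem_principal_self _) ?_
  rintro _ ⟨hge, ⟨m, rfl⟩⟩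
  exact hN m (hd.le_iff_le.1 hge)

theorem Set.Infinite.atTop_inf_principal_neBot {A : Set ℕ} (hA : A.Infinite) :
    (atTop ⊓ 𝓟 A).NeBot :=
  frequently_iff_neBot.1 (Nat.frequently_atTop_iff_infinite.2 hA)

theorem infinite_sep_of_frequently {A : Set ℕ} {p : ℕ → Prop}
    (h : ∃ᶠ k in atTop ⊓ 𝓟 A, p k) : {k ∈ A | p k}.Infinite :=
  Nat.frequently_atTop_iff_infinite.1 (frequently_inf_principal.1 h)

def HereditarilyOn (P : Set ℕ → Prop) (T : Set ℕ) : Prop :=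
  ∀ B ⊆ T, B.Infinite → P B

theorem HereditarilyOn.mono {P : Set ℕ → Prop} {S T : Set ℕ} (h : HereditarilyOn P T)
    (hST : S ⊆ T) : HereditarilyOn P S :=
  fun B hB => h B (hB.trans hST)

theorem exists_le_or_hereditarilyOn_lt {Φ : Set ℕ → ℝ}
    (hmono : ∀ A B, B ⊆ A → B.Infinite → Φ B ≤ Φ A) (htail : ∀ A n, Φ (A ∩ Ici n) = Φ A)
    (c : ℝ) :
    (∃ d : ℕ → ℕ, StrictMono d ∧ Φ (range d) ≤ c) ∨
      ∃ T : Set ℕ, T.Infinite ∧ ∃ η > 0, HereditarilyOn (fun B => c + η < Φ B) T := by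
  refine or_iff_not_imp_right.2 fun h => ?_
  simp only [HereditarilyOn, not_exists, not_and, not_forall, not_lt] at h
  obtain ⟨A, hA⟩ := exists_seq_of_forall_exists (p := Set.Infinite)
    (r := fun n A B => B ⊆ A ∧ Φ B ≤ c + 1 / (n + 1)) infinite_univ fun n A hA => by
      obtain ⟨B, hBA, hB, hΦB⟩ := h A hA _ Nat.one_div_pos_of_nat
      exact ⟨B, hB, hBA, hΦB⟩
  obtain ⟨d, hd, hdA⟩ := extraction_forall_of_frequently fun n =>
    Nat.frequently_atTop_iff_infinite.2 (hA n).1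
  have hA_anti : Antitone A := antitone_nat_of_succ_le fun n => (hA n).2.1
  refine ⟨d, hd, le_of_forall_pos_lt_add fun η hη => ?_⟩
  obtain ⟨n, hn⟩ := exists_nat_one_div_lt hη
  calc Φ (range d) = Φ (range d ∩ Ici (d (n + 1))) := (htail _ _).symm
    _ ≤ Φ (A (n + 1)) := hmono _ _ (range_inter_Ici_subset hA_anti hd hdA _)
          ((infinite_range_of_injective hd.injective).inter_Ici _)
    _ ≤ c + 1 / (n + 1) := (hA n).2.2
    _ < c + η := by linarith

theorem HereditarilyOn.exists_subset_of_finset {γ : Type*} {P : γ → Set ℕ → Prop}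
    (hP : ∀ q B B', B ⊆ B' → P q B → P q B') (G : Finset γ) {T : Set ℕ} (hT : T.Infinite)
    (h : HereditarilyOn (fun B => ∃ q ∈ G, P q B) T) :
    ∃ q ∈ G, ∃ T' ⊆ T, T'.Infinite ∧ HereditarilyOn (P q) T' := by
  classical
  induction G using Finset.strongInduction generalizing T with
  | H G ih =>
    obtain ⟨q, hqG, -⟩ := h T subset_rfl hT
    by_cases hq : HereditarilyOn (P q) T
    · exact ⟨q, hqG, T, subset_rfl, hT, hq⟩
    obtain ⟨B, hBT, hB, hPB⟩ : ∃ B ⊆ T, B.Infinite ∧ ¬ P q B := by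
      simpa [HereditarilyOn] using hq
    -- by monotonicity `q` fails on every subset of `B`, so it can be discarded there
    have hB' : HereditarilyOn (fun B => ∃ q' ∈ G.erase q, P q' B) B := fun B' hB'B hB' => by
      obtain ⟨q', hq'G, hq'⟩ := h B' (hB'B.trans hBT) hB'
      refine ⟨q', Finset.mem_erase.2 ⟨?_, hq'G⟩, hq'⟩
      rintro rfl
      exact hPB (hP q' B' B hB'B hq')
    obtain ⟨q', hq', T', hT'B, hT', hT'P⟩ := ih _ (Finset.erase_ssubset hqG) hB hB'
    exact ⟨q', Finset.mem_of_mem_erase hq', T', hT'B.trans hBT, hT', hT'P⟩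

section Separates

variable {ι : Type*} (U L : ι → Set ℕ)

/-- `U i` and `L i` stand for the indices where the `i`-th functional is `≥ β`, resp. `≤ α`. -/
def Separates (J B : Set ℕ) : Prop :=
  ∃ i, J ⊆ L i ∧ (B ∩ U i).Infinite ∧ (B ∩ L i).Infinite

variable {U L}

theorem Separates.mono {J B B' : Set ℕ} (hB : B ⊆ B') (h : Separates U L J B) :
    Separates U L J B' := by
  obtain ⟨i, hJ, hU, hL⟩ := h
  exact ⟨i, hJ, hU.mono (inter_subset_inter_left _ hB), hL.mono (inter_subset_inter_left _ hB)⟩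

theorem HereditarilyOn.exists_separates_insert {J B : Set ℕ} (hB : B.Infinite)
    (h : HereditarilyOn (Separates U L J) B) :
    ∃ k ∈ B, ∃ B' ⊆ B ∩ Ioi k, B'.Infinite ∧ HereditarilyOn (Separates U L (insert k J)) B' := by
  by_contra! hbad
  obtain ⟨C, hC⟩ := exists_seq_of_forall_exists (p := fun C => C ⊆ B ∧ C.Infinite)
    (r := fun _ C C' => ∃ k ∈ C, C' ⊆ C ∩ Ioi k ∧ ¬ Separates U L (insert k J) C')
    ⟨subset_rfl, hB⟩ fun _ C ⟨hCB, hC⟩ => by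
      obtain ⟨k, hk⟩ := hC.nonempty
      have := hbad k (hCB hk) (C ∩ Ioi k) (inter_subset_inter_left _ hCB) (hC.inter_Ioi k)
      simp only [HereditarilyOn, not_forall] at this
      obtain ⟨C', hC'C, hC', hsep⟩ := this
      exact ⟨C', ⟨hC'C.trans (inter_subset_left.trans hCB), hC'⟩, k, hk, hC'C, hsep⟩
  choose k hkC hCk hsep using fun n => (hC n).2
  have hanti : Antitone C := antitone_nat_of_succ_le fun n => (hCk n).trans inter_subset_left
  have hk : StrictMono k := strictMono_nat_of_lt_succ fun n => (hCk n (hkC (n + 1))).2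
  obtain ⟨i, hJ, hU, hL⟩ := h (range k) (range_subset_iff.2 fun n => (hC n).1.1 (hkC n))
    (infinite_range_of_injective hk.injective)
  obtain ⟨_, ⟨n, rfl⟩, hn⟩ := hL.nonempty
  -- the later `k m` all lie in `C (n + 1)`, so `i` also separates `insert (k n) J` along it
  have htail : ∀ S : Set ℕ, (range k ∩ S).Infinite → (C (n + 1) ∩ S).Infinite := by
    refine fun S hS => (hS.inter_Ici (k (n + 1))).mono ?_
    rintro m ⟨⟨hm, hmS⟩, hmge⟩
    exact ⟨range_inter_Ici_subset hanti hk hkC _ ⟨hm, hmge⟩, hmS⟩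
  exact hsep n ⟨i, insert_subset hn hJ, htail _ hU, htail _ hL⟩

theorem HereditarilyOn.exists_strictMono_separating {T : Set ℕ} (hT : T.Infinite)
    (h : HereditarilyOn (Separates U L ∅) T) :
    ∃ κ : ℕ → ℕ, StrictMono κ ∧ ∃ g : ℕ → ι,
      ∀ n k, (k < n → κ k ∈ L (g n)) ∧ (n ≤ k → κ k ∈ U (g n)) := by
  obtain ⟨s, hs⟩ := exists_seq_of_forall_exists
    (p := fun s : Set ℕ × Set ℕ => s.2.Infinite ∧ HereditarilyOn (Separates U L s.1) s.2)
    (r := fun _ s s' => ∃ k i, s'.1 = insert k s.1 ∧ s.1 ⊆ L i ∧ k ∈ s.2 ∩ U i ∧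
      s'.2 ⊆ s.2 ∩ U i ∩ Ioi k)
    (a := (∅, T)) ⟨hT, h⟩ fun _ ⟨J, B⟩ ⟨hB, hJB⟩ => by
      obtain ⟨i, hJ, hU, -⟩ := hJB B subset_rfl hB
      obtain ⟨k, hk, B', hB'k, hB', hJB'⟩ :=
        (hJB.mono inter_subset_left).exists_separates_insert hU
      exact ⟨(insert k J, B'), ⟨hB', hJB'⟩, k, i, rfl, hJ, hk, hB'k⟩
  choose κ g hJ hL hκ hB using fun n => (hs n).2
  have hanti : Antitone fun n => (s n).2 :=
    antitone_nat_of_succ_le fun n => (hB n).trans (inter_subset_left.trans inter_subset_left)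
  have hmem : ∀ n k, k < n → κ k ∈ (s n).1 := by
    intro n
    induction n with
    | zero => simp
    | succ n ih =>
      intro k hk
      rw [hJ n]
      rcases Nat.lt_succ_iff_lt_or_eq.1 hk with hk | rfl
      · exact mem_insert_of_mem _ (ih k hk)
      · exact mem_insert _ _
  refine ⟨κ, strictMono_nat_of_lt_succ fun n => (hB n (hκ (n + 1)).1).2, g, fun n k =>
    ⟨fun hk => hL n (hmem n k hk), fun hk => ?_⟩⟩
  rcases hk.eq_or_lt with rfl | hk
  · exact (hκ n).2
  · exact (hB n (hanti hk (hκ k).1)).1.2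

end Separates

section Oscillation

variable {u : ℕ → ℝ} {C : ℝ} {A B : Set ℕ}

noncomputable def oscillationAlong (u : ℕ → ℝ) (A : Set ℕ) : ℝ :=
  limsup u (atTop ⊓ 𝓟 A) - liminf u (atTop ⊓ 𝓟 A)

theorem isBoundedUnder_le_of_abs_le (hu : ∀ k, |u k| ≤ C) (F : Filter ℕ) :
    F.IsBoundedUnder (· ≤ ·) u :=
  isBoundedUnder_of ⟨C, fun k => (abs_le.1 (hu k)).2⟩

theorem isBoundedUnder_ge_of_abs_le (hu : ∀ k, |u k| ≤ C) (F : Filter ℕ) :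
    F.IsBoundedUnder (· ≥ ·) u :=
  isBoundedUnder_of ⟨-C, fun k => (abs_le.1 (hu k)).1⟩

theorem oscillationAlong_inter_Ici (u : ℕ → ℝ) (A : Set ℕ) (n : ℕ) :
    oscillationAlong u (A ∩ Ici n) = oscillationAlong u A := by
  have : atTop ⊓ 𝓟 (A ∩ Ici n) = atTop ⊓ 𝓟 A := by
    rw [← inf_principal, inf_comm (𝓟 A), ← inf_assoc,
      inf_eq_left.2 (le_principal_iff.2 (Ici_mem_atTop n))]
  simp only [oscillationAlong, this]

theorem oscillationAlong_mono (hu : ∀ k, |u k| ≤ C) (hBA : B ⊆ A) (hB : B.Infinite) :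
    oscillationAlong u B ≤ oscillationAlong u A := by
  have := hB.atTop_inf_principal_neBot
  have hle : atTop ⊓ 𝓟 B ≤ atTop ⊓ 𝓟 A := inf_le_inf_left _ (principal_mono.2 hBA)
  have hsup := limsup_le_limsup_of_le hle
    (isBoundedUnder_ge_of_abs_le hu _).isCoboundedUnder_le (isBoundedUnder_le_of_abs_le hu _)
  have hinf := liminf_le_liminf_of_le hle
    (isBoundedUnder_ge_of_abs_le hu _) (isBoundedUnder_le_of_abs_le hu _).isCoboundedUnder_ge
  rw [oscillationAlong, oscillationAlong]
  linarith

theorem neg_le_liminf_of_abs_le (hu : ∀ k, |u k| ≤ C) (hA : A.Infinite) :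
    -C ≤ liminf u (atTop ⊓ 𝓟 A) :=
  have := hA.atTop_inf_principal_neBot
  le_liminf_of_le (isBoundedUnder_le_of_abs_le hu _).isCoboundedUnder_ge
    (.of_forall fun k => (abs_le.1 (hu k)).1)

theorem limsup_le_of_abs_le (hu : ∀ k, |u k| ≤ C) (hA : A.Infinite) :
    limsup u (atTop ⊓ 𝓟 A) ≤ C :=
  have := hA.atTop_inf_principal_neBot
  limsup_le_of_le (isBoundedUnder_ge_of_abs_le hu _).isCoboundedUnder_le
    (.of_forall fun k => (abs_le.1 (hu k)).2)

theorem oscillationAlong_le_two_mul (hu : ∀ k, |u k| ≤ C) (hA : A.Infinite) :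
    oscillationAlong u A ≤ 2 * C := by
  have := neg_le_liminf_of_abs_le hu hA
  have := limsup_le_of_abs_le hu hA
  rw [oscillationAlong]
  linarith

theorem oscillationAlong_range {d : ℕ → ℕ} (hd : StrictMono d) (u : ℕ → ℝ) :
    oscillationAlong u (range d) = limsup (u ∘ d) atTop - liminf (u ∘ d) atTop := by
  rw [oscillationAlong, ← hd.map_atTop_eq_inf_principal_range, limsup_comp, liminf_comp]

/-- `i * μ` is the first multiple of `μ` above the `liminf`; restricting the levels to a grid
leaves finitely many of them. -/
theorem exists_level_of_lt_oscillationAlong (hu : ∀ k, |u k| ≤ C) (hA : A.Infinite) {γ μ : ℝ}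
    (hμ : 0 < μ) (h : γ + μ < oscillationAlong u A) :
    ∃ i ∈ Finset.Ioo ⌊-C / μ⌋ ⌈(C - γ) / μ⌉,
      {k ∈ A | i * μ + γ ≤ u k}.Infinite ∧ {k ∈ A | u k ≤ i * μ}.Infinite := by
  have := hA.atTop_inf_principal_neBot
  have ha := neg_le_liminf_of_abs_le hu hA
  have hb := limsup_le_of_abs_le hu hA
  set a := liminf u (atTop ⊓ 𝓟 A)
  set b := limsup u (atTop ⊓ 𝓟 A)
  set i : ℤ := ⌊a / μ⌋ + 1
  have hai : a < i * μ := by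
    rw [← div_lt_iff₀ hμ]
    exact_mod_cast Int.lt_floor_add_one (a / μ)
  have hia : i * μ ≤ a + μ := by
    have : (i : ℝ) ≤ a / μ + 1 := by push_cast [i]; linarith [Int.floor_le (a / μ)]
    calc (i : ℝ) * μ ≤ (a / μ + 1) * μ := by gcongr
      _ = a + μ := by field_simp
  have hib : i * μ + γ < b := by rw [oscillationAlong] at h; linarith
  refine ⟨i, Finset.mem_Ioo.2 ⟨Int.floor_lt.2 ?_, Int.lt_ceil.2 ?_⟩, ?_, ?_⟩
  · rw [div_lt_iff₀ hμ]; linarith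
  · rw [lt_div_iff₀ hμ]; linarith
  · exact (infinite_sep_of_frequently (frequently_lt_of_lt_limsup
      (isBoundedUnder_ge_of_abs_le hu _).isCoboundedUnder_le hib)).mono fun k hk => ⟨hk.1, hk.2.le⟩
  · exact (infinite_sep_of_frequently (frequently_lt_of_liminf_lt
      (isBoundedUnder_le_of_abs_le hu _).isCoboundedUnder_ge hai)).mono fun k hk => ⟨hk.1, hk.2.le⟩

end Oscillation

section Delta

variable {E : Type*} [NormedAddCommGroup E] [NormedSpace ℝ E] {x : ℕ → E} {C : ℝ} {A B : Set ℕ}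

/-- `δ` of the subsequence of `x` indexed by `A`. -/
noncomputable def deltaOn (x : ℕ → E) (A : Set ℕ) : ℝ :=
  ⨆ f : closedBall (0 : StrongDual ℝ E) 1, oscillationAlong (fun k => f.1 (x k)) A

theorem abs_apply_le_of_norm_le (hx : ∀ k, ‖x k‖ ≤ C) (f : closedBall (0 : StrongDual ℝ E) 1)
    (k : ℕ) : |f.1 (x k)| ≤ C :=
  calc |f.1 (x k)| ≤ 1 * ‖x k‖ := f.1.le_of_opNorm_le (mem_closedBall_zero_iff.1 f.2) (x k)
    _ ≤ C := by rw [one_mul]; exact hx k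

theorem oscillationAlong_le_deltaOn (hx : ∀ k, ‖x k‖ ≤ C) (hA : A.Infinite)
    (f : closedBall (0 : StrongDual ℝ E) 1) :
    oscillationAlong (fun k => f.1 (x k)) A ≤ deltaOn x A :=
  le_ciSup ⟨2 * C, forall_mem_range.2 fun g =>
    oscillationAlong_le_two_mul (abs_apply_le_of_norm_le hx g) hA⟩ f

theorem deltaOn_mono (hx : ∀ k, ‖x k‖ ≤ C) (hBA : B ⊆ A) (hB : B.Infinite) :
    deltaOn x B ≤ deltaOn x A :=
  ciSup_le fun f => (oscillationAlong_mono (abs_apply_le_of_norm_le hx f) hBA hB).trans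
    (oscillationAlong_le_deltaOn hx (hB.mono hBA) f)

theorem deltaOn_inter_Ici (x : ℕ → E) (A : Set ℕ) (n : ℕ) :
    deltaOn x (A ∩ Ici n) = deltaOn x A := by
  simp only [deltaOn, oscillationAlong_inter_Ici]

theorem deltaLE_of_deltaOn_le (hx : ∀ k, ‖x k‖ ≤ C) {d : ℕ → ℕ} (hd : StrictMono d) {c : ℝ}
    (h : deltaOn x (range d) ≤ c) : DeltaLE (fun k => x (d k)) c := fun f hf => by
  have := oscillationAlong_le_deltaOn hx (infinite_range_of_injective hd.injective)
    ⟨f, mem_closedBall_zero_iff.2 hf⟩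
  rw [oscillationAlong_range hd] at this
  exact this.trans h

theorem exists_staircase_of_hereditarilyOn_lt_deltaOn (hx : ∀ k, ‖x k‖ ≤ C) {T : Set ℕ}
    (hT : T.Infinite) {c η : ℝ} (hη : 0 < η) (h : HereditarilyOn (fun B => c + η < deltaOn x B) T) :
    ∃ κ : ℕ → ℕ, StrictMono κ ∧ ∃ α : ℝ, ∃ f : ℕ → StrongDual ℝ E, (∀ n, ‖f n‖ ≤ 1) ∧
      ∀ n k, (k < n → f n (x (κ k)) ≤ α) ∧ (n ≤ k → α + (c + η / 2) ≤ f n (x (κ k))) := by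
  set μ := η / 2
  set γ := c + η / 2
  let P : ℤ → Set ℕ → Prop := fun i => Separates
    (fun f : closedBall (0 : StrongDual ℝ E) 1 => {k | i * μ + γ ≤ f.1 (x k)})
    (fun f => {k | f.1 (x k) ≤ i * μ}) ∅
  have hcolour : HereditarilyOn (fun B => ∃ i ∈ Finset.Ioo ⌊-C / μ⌋ ⌈(C - γ) / μ⌉, P i B) T :=
    fun B hBT hB => by
      obtain ⟨f, hf⟩ := exists_lt_of_lt_ciSup (show γ + μ < deltaOn x B by
        have := h B hBT hB; simp only [γ, μ]; linarith)
      obtain ⟨i, hi, hU, hL⟩ :=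
        exists_level_of_lt_oscillationAlong (abs_apply_le_of_norm_le hx f) hB (half_pos hη) hf
      exact ⟨i, hi, f, empty_subset _, hU, hL⟩
  obtain ⟨i, -, T', -, hT', hsep⟩ :=
    hcolour.exists_subset_of_finset (P := P) (fun _ _ _ hBB' => Separates.mono hBB') _ hT
  obtain ⟨κ, hκ, g, hg⟩ := hsep.exists_strictMono_separating hT'
  exact ⟨κ, hκ, i * μ, fun n => g n, fun n => mem_closedBall_zero_iff.1 (g n).2, hg⟩

theorem exists_mapClusterPt_inclusionInDoubleDual {w : ℕ → E} (hw : ∀ k, ‖w k‖ ≤ C) :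
    ∃ z : StrongDual ℝ (StrongDual ℝ E), MapClusterPt (StrongDual.toWeakDual z) atTop
      fun k => StrongDual.toWeakDual (inclusionInDoubleDual ℝ E (w k)) := by
  obtain ⟨z, -, hz⟩ := (WeakDual.isCompact_closedBall (0 : StrongDual ℝ (StrongDual ℝ E)) C)
    |>.exists_mapClusterPt (f := atTop) (tendsto_principal.2 (.of_forall fun k =>
      mem_closedBall_zero_iff.2 ((double_dual_bound ℝ E (w k)).trans (hw k))))
  exact ⟨WeakDual.toStrongDual z, hz⟩

theorem sub_le_two_mul_norm_sub_of_mapClusterPt {w : ℕ → E} {f : ℕ → StrongDual ℝ E}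
    (hf : ∀ n, ‖f n‖ ≤ 1) {α β : ℝ} (hlow : ∀ n k, k < n → f n (w k) ≤ α)
    (hhigh : ∀ n k, n ≤ k → β ≤ f n (w k)) {z : StrongDual ℝ (StrongDual ℝ E)}
    (hz : MapClusterPt (StrongDual.toWeakDual z) atTop
      fun k => StrongDual.toWeakDual (inclusionInDoubleDual ℝ E (w k))) (x₀ : E) :
    β - α ≤ 2 * ‖z - inclusionInDoubleDual ℝ E x₀‖ := by
  set d := ‖z - inclusionInDoubleDual ℝ E x₀‖
  have hzx : ∀ ψ : StrongDual ℝ E, ‖ψ‖ ≤ 1 → |z ψ - ψ x₀| ≤ d := fun ψ hψ => by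
    have := (z - inclusionInDoubleDual ℝ E x₀).le_opNorm ψ
    rw [sub_apply, dual_def, Real.norm_eq_abs] at this
    exact this.trans (mul_le_of_le_one_right (norm_nonneg _) hψ)
  have hfx : ∀ n, β - d ≤ f n x₀ := fun n => by
    have hzf : β ≤ z (f n) := (isClosed_le continuous_const (WeakDual.eval_continuous (f n)))
      |>.mem_of_mapClusterPt hz ((eventually_ge_atTop n).mono fun k hk => hhigh n k hk)
    linarith [(abs_le.1 (hzx _ (hf n))).2]
  obtain ⟨φ, hφ, hφf⟩ := (WeakDual.isCompact_closedBall (0 : StrongDual ℝ E) 1)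
    |>.exists_mapClusterPt (f := atTop) (u := fun n => StrongDual.toWeakDual (f n))
      (tendsto_principal.2 (.of_forall fun n => by simpa using hf n))
  have hφw : ∀ k, φ (w k) ≤ α := fun k =>
    (isClosed_le (WeakDual.eval_continuous (w k)) continuous_const).mem_of_mapClusterPt hφf
      ((eventually_gt_atTop k).mono fun n hn => hlow n k hn)
  have hφx : β - d ≤ φ x₀ :=
    (isClosed_le continuous_const (WeakDual.eval_continuous x₀)).mem_of_mapClusterPt hφf
      (.of_forall hfx)
  have hzφ : z (WeakDual.toStrongDual φ) ≤ α :=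
    (isClosed_le (WeakDual.eval_continuous (WeakDual.toStrongDual φ)) continuous_const)
      |>.mem_of_mapClusterPt hz (.of_forall hφw)
  have : |z (WeakDual.toStrongDual φ) - φ x₀| ≤ d := hzx _ (mem_closedBall_zero_iff.1 hφ)
  linarith [(abs_le.1 this).1]

end Delta

theorem relWeaklyCompact_implies_weaklyPrecompact_general
    {X : Type*} [NormedAddCommGroup X] [NormedSpace ℝ X]
    (M : Set X) (ε : ℝ)
    (h : IsRelWeaklyCompactWith ε M) :
    IsWeaklyPrecompactWith (2 * ε) M := by
  obtain ⟨hM, hclosure⟩ := h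
  refine ⟨hM, fun x hxM => ?_⟩
  obtain ⟨C, hC⟩ := hM.exists_norm_le
  have hx : ∀ k, ‖x k‖ ≤ C := fun k => hC _ (hxM k)
  rcases exists_le_or_hereditarilyOn_lt (fun _ _ => deltaOn_mono hx) (deltaOn_inter_Ici x) (2 * ε)
    with ⟨d, hd, hδ⟩ | ⟨T, hT, η, hη, hTδ⟩
  · exact ⟨d, hd, deltaLE_of_deltaOn_le hx hd hδ⟩
  obtain ⟨κ, -, α, f, hf, hfκ⟩ := exists_staircase_of_hereditarilyOn_lt_deltaOn hx hT hη hTδ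
  obtain ⟨z, hz⟩ := exists_mapClusterPt_inclusionInDoubleDual fun k => hx (κ k)
  have hrange : range (fun k => StrongDual.toWeakDual (inclusionInDoubleDual ℝ X (x (κ k)))) ⊆
      StrongDual.toWeakDual '' (inclusionInDoubleDual ℝ X '' M) :=
    range_subset_iff.2 fun k => mem_image_of_mem _ (mem_image_of_mem _ (hxM _))
  have hzM := closure_mono hrange (hz.mem_closure_of_mem _ range_mem_map)
  obtain ⟨x₀, hx₀⟩ := hclosure z hzM
  have := sub_le_two_mul_norm_sub_of_mapClusterPt hf (fun n k hk => (hfκ n k).1 hk)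
    (fun n k hk => (hfκ n k).2 hk) hz x₀
  linarith

theorem relWeaklyCompact_implies_weaklyPrecompact
    {X : Type*} [NormedAddCommGroup X] [NormedSpace ℝ X] [CompleteSpace X]
    (M : Set X) (hM : Bornology.IsBounded M) (ε : ℝ) (hε : 0 ≤ ε)
    (h : IsRelWeaklyCompactWith ε M) :
    IsWeaklyPrecompactWith (2 * ε) M :=
  relWeaklyCompact_implies_weaklyPrecompact_general M ε h
end

section
/- Let X be a real Banach space. If X is strongly weakly precompactly generated (SWPG), then X has property KM_w. -/
open Filter Topology Pointwise

/-- `X` is strongly weakly precompactly generated: there is a weakly precompact set `C₀`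
such that every weakly precompact `C ⊆ X` satisfies `C ⊆ nC₀ + εB_X` for some `n`. -/
def IsSWPG (X : Type*) [NormedAddCommGroup X] [NormedSpace ℝ X] : Prop :=
  ∃ C₀ : Set X, IsWeaklyPrecompactWith 0 C₀ ∧
    ∀ C : Set X, IsWeaklyPrecompactWith 0 C → ∀ ε : ℝ, 0 < ε →
      ∃ n : ℕ, C ⊆ (n : ℝ) • C₀ + Metric.closedBall (0 : X) ε

/-- Property `KM_w`. -/
def HasKMw (X : Type*) [NormedAddCommGroup X] [NormedSpace ℝ X] : Prop :=
  ∃ M : ℕ → ℕ → Set X,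
    (∀ n p : ℕ, 0 < p → IsWeaklyPrecompactWith (1 / (p : ℝ)) (M n p)) ∧
    (∀ C : Set X, IsWeaklyPrecompactWith 0 C → ∀ p : ℕ, 0 < p → ∃ n : ℕ, C ⊆ M n p)

/-- Auxiliary: if `δ((c_k)) ≤ 0`, `(c_k)` is bounded, and `‖b_k‖ ≤ r`, then
`δ((n • c_k + b_k)) ≤ 2r`. -/
lemma deltaLE_smul_add {X : Type*} [NormedAddCommGroup X] [NormedSpace ℝ X]
    {c b : ℕ → X} {R : ℝ} (hc : ∀ k, ‖c k‖ ≤ R) (hd : DeltaLE c 0)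
    (n : ℕ) {r : ℝ} (hb : ∀ k, ‖b k‖ ≤ r) :
    DeltaLE (fun k => (n : ℝ) • c k + b k) (2 * r) := by
  intro f hf
  set g : ℕ → ℝ := fun k => f (c k) with hg
  have hgbd : ∀ k, |g k| ≤ R := by
    intro k
    calc |g k| ≤ ‖f‖ * ‖c k‖ := f.le_opNorm (c k)
    _ ≤ 1 * R := by
        apply mul_le_mul hf (hc k) (norm_nonneg _) zero_le_one
    _ = R := one_mul R
  have hgub : IsBoundedUnder (· ≤ ·) atTop g :=
    isBoundedUnder_of ⟨R, fun k => (abs_le.1 (hgbd k)).2⟩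
  have hglb : IsBoundedUnder (· ≥ ·) atTop g :=
    isBoundedUnder_of ⟨-R, fun k => (abs_le.1 (hgbd k)).1⟩
  have hle : limsup g atTop - liminf g atTop ≤ 0 := hd f hf
  have hge : liminf g atTop ≤ limsup g atTop := liminf_le_limsup hgub hglb
  have heq : liminf g atTop = limsup g atTop := le_antisymm hge (by linarith)
  set L : ℝ := limsup g atTop with hL
  have htend : Tendsto g atTop (𝓝 L) := tendsto_of_liminf_eq_limsup heq rfl hgub hglb
  have hfb : ∀ k, |f (b k)| ≤ r := by
    intro k
    calc |f (b k)| ≤ ‖f‖ * ‖b k‖ := f.le_opNorm (b k)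
    _ ≤ 1 * r := by
        apply mul_le_mul hf (hb k) (norm_nonneg _)  zero_le_one
    _ = r := one_mul r
  have hx : ∀ k, f ((n : ℝ) • c k + b k) = (n : ℝ) * g k + f (b k) := by
    intro k; simp [hg]
  have hxub : IsBoundedUnder (· ≤ ·) atTop (fun k => f ((n : ℝ) • c k + b k)) := by
    refine isBoundedUnder_of ⟨(n : ℝ) * R + r, fun k => ?_⟩
    rw [hx k]
    have := (abs_le.1 (hgbd k)).2
    have := (abs_le.1 (hfb k)).2
    have hn : (0 : ℝ) ≤ n := Nat.cast_nonneg n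
    nlinarith
  have hxlb : IsBoundedUnder (· ≥ ·) atTop (fun k => f ((n : ℝ) • c k + b k)) := by
    refine isBoundedUnder_of ⟨-((n : ℝ) * R + r), fun k => ?_⟩
    rw [hx k]
    have := (abs_le.1 (hgbd k)).1
    have := (abs_le.1 (hfb k)).1
    have hn : (0 : ℝ) ≤ n := Nat.cast_nonneg n
    nlinarith
  have htend' : Tendsto (fun k => (n : ℝ) * g k) atTop (𝓝 ((n : ℝ) * L)) :=
    htend.const_mul _
  have hup : limsup (fun k => f ((n : ℝ) • c k + b k)) atTop ≤ (n : ℝ) * L + r := by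
    have h1 : Tendsto (fun k => (n : ℝ) * g k + r) atTop (𝓝 ((n : ℝ) * L + r)) :=
      htend'.add_const r
    calc limsup (fun k => f ((n : ℝ) • c k + b k)) atTop
        ≤ limsup (fun k => (n : ℝ) * g k + r) atTop := by
          apply limsup_le_limsup (Eventually.of_forall fun k => ?_)
            hxlb.isCoboundedUnder_le h1.isBoundedUnder_le
          rw [hx k]
          linarith [(abs_le.1 (hfb k)).2]
      _ = (n : ℝ) * L + r := h1.limsup_eq
  have hdown : (n : ℝ) * L - r ≤ liminf (fun k => f ((n : ℝ) • c k + b k)) atTop := by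
    have h1 : Tendsto (fun k => (n : ℝ) * g k - r) atTop (𝓝 ((n : ℝ) * L - r)) :=
      htend'.sub_const r
    calc ((n : ℝ) * L - r) = liminf (fun k => (n : ℝ) * g k - r) atTop := h1.liminf_eq.symm
      _ ≤ liminf (fun k => f ((n : ℝ) • c k + b k)) atTop := by
          apply liminf_le_liminf (Eventually.of_forall fun k => ?_)
            h1.isBoundedUnder_ge hxub.isCoboundedUnder_ge
          rw [hx k]
          linarith [(abs_le.1 (hfb k)).1]
  linarith

theorem swpg_implies_hasKMw
    {X : Type*} [NormedAddCommGroup X] [NormedSpace ℝ X] [CompleteSpace X]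
    (h : IsSWPG X) : HasKMw X := by
  obtain ⟨C₀, ⟨hC₀bd, hC₀seq⟩, hgen⟩ := h
  obtain ⟨R, hR⟩ := isBounded_iff_forall_norm_le.1 hC₀bd
  refine ⟨fun n p => (n : ℝ) • C₀ + Metric.closedBall (0 : X) (1 / (2 * (p : ℝ))), ?_, ?_⟩
  · intro n p hp
    have hp' : (0 : ℝ) < p := by exact_mod_cast hp
    constructor
    · exact (hC₀bd.smul₀ ((n : ℝ))).add Metric.isBounded_closedBall
    · intro x hx
      have hex : ∀ k, ∃ c, c ∈ C₀ ∧ ∃ b, ‖b‖ ≤ 1 / (2 * (p : ℝ)) ∧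
          x k = (n : ℝ) • c + b := by
        intro k
        obtain ⟨a, ha, b, hb, hab⟩ := Set.mem_add.1 (hx k)
        obtain ⟨c, hc, hca⟩ := Set.mem_smul_set.1 ha
        refine ⟨c, hc, b, ?_, by rw [← hab, hca]⟩
        simpa [dist_eq_norm] using Metric.mem_closedBall.1 hb
      choose c hc b hbnorm hxe using hex
      obtain ⟨φ, hφ, hdc⟩ := hC₀seq c hc
      refine ⟨φ, hφ, ?_⟩
      have key : DeltaLE (fun k => (n : ℝ) • c (φ k) + b (φ k))
          (2 * (1 / (2 * (p : ℝ)))) :=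
        deltaLE_smul_add (fun k => hR _ (hc (φ k))) hdc n (fun k => hbnorm (φ k))
      have h2 : 2 * (1 / (2 * (p : ℝ))) = 1 / (p : ℝ) := by
        field_simp
      have hfun : (fun k => x (φ k)) = fun k => (n : ℝ) • c (φ k) + b (φ k) := by
        funext k; exact hxe (φ k)
      rw [hfun]
      rw [h2] at key
      exact key
  · intro C hC p hp
    have hp' : (0 : ℝ) < p := by exact_mod_cast hp
    exact hgen C hC (1 / (2 * (p : ℝ))) (by positivity)
end

section
/- For every 1 < p < ∞, the Banach space ℓ_p(ℓ₁), i.e., the ℓ_p-sum of countably many copies of ℓ₁ (the space of all sequences (x_m) with x_m ∈ ℓ₁ and ∑_m ‖x_m‖_{ℓ₁}^p < ∞, with norm (∑_m ‖x_m‖_{ℓ₁}^p)^{1/p}), fails property KM_w. -/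
open Filter Topology ENNReal

noncomputable section KMwAux

abbrev KMwL1 : Type := lp (fun _ : ℕ => ℝ) 1
abbrev KMwX (p : ℝ≥0∞) [Fact (1 ≤ p)] : Type := lp (fun _ : ℕ => KMwL1) p

lemma KMw_summable_abs (y : KMwL1) : Summable (fun j => ‖y j‖) := by
  have := (lp.memℓp y).summable (by norm_num : 0 < (1 : ℝ≥0∞).toReal)
  simpa using this

lemma KMw_summable_mul_norm (s : ℕ → ℝ) (hs : ∀ j, |s j| ≤ 1) (y : KMwL1) :
    Summable (fun j => ‖s j * y j‖) := by
  refine Summable.of_nonneg_of_le (fun j => norm_nonneg _) (fun j => ?_) (KMw_summable_abs y)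
  rw [norm_mul]
  exact (mul_le_mul_of_nonneg_right (hs j) (norm_nonneg _)).trans_eq (one_mul _)

lemma KMw_summable_mul (s : ℕ → ℝ) (hs : ∀ j, |s j| ≤ 1) (y : KMwL1) :
    Summable (fun j => s j * y j) := by
  refine Summable.of_norm_bounded (KMw_summable_abs y) (fun j => ?_)
  rw [norm_mul]
  calc ‖s j‖ * ‖y j‖ ≤ 1 * ‖y j‖ := by
        exact mul_le_mul_of_nonneg_right (hs j) (norm_nonneg _)
    _ = ‖y j‖ := one_mul _

/-- The functional `y ↦ ∑' j, s j * y j` on `ℓ₁`. -/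
def KMwSign (s : ℕ → ℝ) (hs : ∀ j, |s j| ≤ 1) : KMwL1 →L[ℝ] ℝ :=
  LinearMap.mkContinuous
    { toFun := fun y => ∑' j, s j * y j
      map_add' := fun y z => by
        have h1 := KMw_summable_mul s hs y
        have h2 := KMw_summable_mul s hs z
        show ∑' j, s j * (y + z) j = (∑' j, s j * y j) + ∑' j, s j * z j
        have : (fun j => s j * (y + z) j) = fun j => s j * y j + s j * z j := by
          funext j
          simp [mul_add]
        rw [this, Summable.tsum_add h1 h2]
      map_smul' := fun c y => by
        show ∑' j, s j * (c • y) j = c • ∑' j, s j * y j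
        have : (fun j => s j * (c • y) j) = fun j => c * (s j * y j) := by
          funext j
          simp [lp.coeFn_smul]
          ring
        simp only [smul_eq_mul, this, tsum_mul_left] }
    1
    (fun y => by
      simp only [LinearMap.coe_mk, AddHom.coe_mk, one_mul]
      calc ‖∑' j, s j * y j‖ ≤ ∑' j, ‖s j * y j‖ :=
            norm_tsum_le_tsum_norm ((KMw_summable_mul_norm s hs y))
        _ ≤ ∑' j, ‖y j‖ := by
            refine Summable.tsum_le_tsum (fun j => ?_) ((KMw_summable_mul_norm s hs y)) (KMw_summable_abs y)
            rw [norm_mul]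
            exact (mul_le_mul_of_nonneg_right (hs j) (norm_nonneg _)).trans_eq (one_mul _)
        _ = ‖y‖ := by
            rw [lp.norm_eq_tsum_rpow (by norm_num) y]
            norm_num)

lemma KMwSign_norm_le (s : ℕ → ℝ) (hs : ∀ j, |s j| ≤ 1) : ‖KMwSign s hs‖ ≤ 1 :=
  LinearMap.mkContinuous_norm_le _ zero_le_one _

def KMwE (j : ℕ) : KMwL1 := lp.single 1 j (1 : ℝ)

lemma KMwSign_apply_E (s : ℕ → ℝ) (hs : ∀ j, |s j| ≤ 1) (j : ℕ) :
    KMwSign s hs (KMwE j) = s j := by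
  have : KMwSign s hs (KMwE j) = ∑' m, s m * (KMwE j) m := rfl
  rw [this, tsum_eq_single j]
  · rw [KMwE, lp.single_apply_self, mul_one]
  · intro m hm
    rw [KMwE, lp.single_apply_ne 1 j _ hm, mul_zero]

lemma KMwE_norm (j : ℕ) : ‖KMwE j‖ = 1 := by
  have := lp.norm_single (E := fun _ : ℕ => ℝ) (p := 1) (by norm_num) j (1:ℝ)
  simpa [KMwE] using this

variable (p : ℝ≥0∞) [Fact (1 ≤ p)]

/-- Coordinate projection. -/
def KMwProj (n : ℕ) : KMwX p →L[ℝ] KMwL1 :=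
  LinearMap.mkContinuous
    { toFun := fun x => x n
      map_add' := fun x y => rfl
      map_smul' := fun c x => rfl }
    1
    (fun x => by
      simp only [LinearMap.coe_mk, AddHom.coe_mk, one_mul]
      exact lp.norm_apply_le_norm (zero_lt_one.trans_le (Fact.out : 1 ≤ p)).ne' x n)

lemma KMwProj_norm_le (n : ℕ) : ‖KMwProj p n‖ ≤ 1 :=
  LinearMap.mkContinuous_norm_le _ zero_le_one _

lemma KMwProj_apply (n : ℕ) (x : KMwX p) : KMwProj p n x = x n := rfl

lemma KMw_exists_not_mem (M : Set (KMwX p)) (hM : IsWeaklyPrecompactWith 1 M) (n : ℕ) :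
    ∃ j : ℕ, lp.single p n (KMwE j) ∉ M := by
  by_contra h
  push_neg at h
  obtain ⟨φ, hφ, hδ⟩ := hM.2 (fun j => lp.single p n (KMwE j)) h
  classical
  set s : ℕ → ℝ := fun m => if h : ∃ k, φ k = m then (-1 : ℝ) ^ (Nat.find h) else 0 with hs_def
  have hs : ∀ m, |s m| ≤ 1 := by
    intro m
    by_cases h' : ∃ k, φ k = m
    · simp [hs_def, h', abs_pow]
    · simp [hs_def, h']
  have hsφ : ∀ k, s (φ k) = (-1 : ℝ) ^ k := by
    intro k
    have h' : ∃ k', φ k' = φ k := ⟨k, rfl⟩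
    have hk : Nat.find h' = k := hφ.injective (Nat.find_spec h')
    simp only [hs_def, dif_pos h', hk]
  set f : KMwX p →L[ℝ] ℝ := (KMwSign s hs).comp (KMwProj p n) with hf_def
  have hfnorm : ‖f‖ ≤ 1 := by
    refine (ContinuousLinearMap.opNorm_comp_le _ _).trans ?_
    calc ‖KMwSign s hs‖ * ‖KMwProj p n‖ ≤ 1 * 1 :=
          mul_le_mul (KMwSign_norm_le s hs) (KMwProj_norm_le p n) (norm_nonneg _) zero_le_one
      _ = 1 := one_mul 1
  have hval : ∀ k, f (lp.single p n (KMwE (φ k))) = (-1 : ℝ) ^ k := by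
    intro k
    rw [hf_def]
    simp only [ContinuousLinearMap.comp_apply, KMwProj_apply]
    rw [lp.single_apply_self, KMwSign_apply_E, hsφ]
  set u : ℕ → ℝ := fun k => f (lp.single p n (KMwE (φ k))) with hu_def
  have hδ2 : limsup u atTop - liminf u atTop ≤ 1 := hδ f hfnorm
  have hbd1 : IsBoundedUnder (· ≤ ·) atTop u :=
    isBoundedUnder_of ⟨1, fun k => by
      rw [hu_def]; simp only; rw [hval k]
      exact (le_abs_self _).trans (by simp [abs_pow])⟩
  have hbd2 : IsBoundedUnder (· ≥ ·) atTop u :=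
    isBoundedUnder_of ⟨-1, fun k => by
      rw [hu_def]; simp only; rw [hval k]
      have : -|(-1:ℝ)^k| ≤ (-1:ℝ)^k := neg_abs_le _
      simpa [abs_pow] using this⟩
  have hup : (1:ℝ) ≤ limsup u atTop := by
    refine le_limsup_of_frequently_le ?_ hbd1
    rw [frequently_atTop]
    intro a
    refine ⟨2*a, by omega, ?_⟩
    rw [hu_def]; simp only; rw [hval (2*a)]
    simp [pow_mul]
  have hlo : liminf u atTop ≤ -1 := by
    refine liminf_le_of_frequently_le ?_ hbd2
    rw [frequently_atTop]
    intro a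
    refine ⟨2*a+1, by omega, ?_⟩
    rw [hu_def]; simp only; rw [hval (2*a+1)]
    simp [pow_add, pow_mul]
  linarith

lemma KMw_tendsto_zero (hp : 1 < p) (hp' : p ≠ ⊤) (w : ℕ → KMwL1) (hw : ∀ i, ‖w i‖ ≤ 1)
    (f : KMwX p →L[ℝ] ℝ) :
    Tendsto (fun i => f (lp.single p i (w i))) atTop (𝓝 0) := by
  classical
  set b : ℕ → ℝ := fun i => f (lp.single p i (w i)) with hb_def
  have hpr1 : 1 < p.toReal := by
    have := (ENNReal.toReal_lt_toReal ENNReal.one_ne_top hp').mpr hp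
    simpa using this
  have hpr0 : 0 < p.toReal := lt_trans one_pos hpr1
  set pr := p.toReal with hpr_def
  have key : ∀ ε : ℝ, 0 < ε → {i : ℕ | ε ≤ |b i|}.Finite := by
    intro ε hε
    by_contra hS
    have hS' : {i : ℕ | ε ≤ |b i|}.Infinite := hS
    set r := 1 - 1/pr with hr_def
    have hrpos : 0 < r := by
      have h1 : 1/pr < 1 := by rw [div_lt_one hpr0]; exact hpr1
      simp only [hr_def]; linarith
    have htend : Tendsto (fun N : ℕ => ((N:ℝ)) ^ r) atTop atTop :=
      (tendsto_rpow_atTop hrpos).comp tendsto_natCast_atTop_atTop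
    obtain ⟨N, hN⟩ := ((htend.eventually_gt_atTop ((‖f‖ + 1)/ε)).and (eventually_ge_atTop 1)).exists
    have hNr : (‖f‖ + 1)/ε < (N:ℝ) ^ r := hN.1
    have hN1 : 1 ≤ N := hN.2
    obtain ⟨t, hts, htcard⟩ := Set.Infinite.exists_subset_card_eq hS' N
    set g : ℕ → KMwL1 := fun i => (if 0 ≤ b i then (1:ℝ) else -1) • w i with hg_def
    set y : KMwX p := ∑ i ∈ t, lp.single p i (g i) with hy_def
    have hgnorm : ∀ i, ‖g i‖ ≤ 1 := by
      intro i
      rw [hg_def]; simp only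
      rw [norm_smul]
      have h1 : ‖(if 0 ≤ b i then (1:ℝ) else -1)‖ = 1 := by split <;> simp
      rw [h1, one_mul]; exact hw i
    have hynorm : ‖y‖ ≤ (N:ℝ) ^ (1/pr) := by
      have h1 : ‖y‖ ^ pr = ∑ i ∈ t, ‖g i‖ ^ pr := lp.norm_sum_single hpr0 g t
      have h2 : ∑ i ∈ t, ‖g i‖ ^ pr ≤ (N:ℝ) := by
        calc ∑ i ∈ t, ‖g i‖ ^ pr ≤ ∑ _i ∈ t, (1:ℝ) :=
              Finset.sum_le_sum (fun i _ => Real.rpow_le_one (norm_nonneg _) (hgnorm i) hpr0.le)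
          _ = (t.card : ℝ) := by simp
          _ = (N:ℝ) := by rw [htcard]
      have h3 : ‖y‖ ^ pr ≤ (N:ℝ) := h1.trans_le h2
      have h4 : (‖y‖ ^ pr) ^ (1/pr) ≤ ((N:ℝ)) ^ (1/pr) :=
        Real.rpow_le_rpow (Real.rpow_nonneg (norm_nonneg _) _) h3 (by positivity)
      calc ‖y‖ = (‖y‖ ^ pr) ^ (1/pr) := by
            rw [← Real.rpow_mul (norm_nonneg _), mul_one_div_cancel hpr0.ne', Real.rpow_one]
        _ ≤ ((N:ℝ)) ^ (1/pr) := h4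
    have hfy : (N:ℝ) * ε ≤ f y := by
      have hmv : f y = ∑ i ∈ t, (if 0 ≤ b i then (1:ℝ) else -1) * b i := by
        rw [hy_def, map_sum]
        refine Finset.sum_congr rfl (fun i _ => ?_)
        rw [hg_def]; simp only
        rw [lp.single_smul, map_smul, smul_eq_mul]
      have habs : ∀ i ∈ t, (if 0 ≤ b i then (1:ℝ) else -1) * b i = |b i| := by
        intro i _
        split
        · rw [one_mul, abs_of_nonneg ‹_›]
        · rw [neg_one_mul, abs_of_neg (lt_of_not_ge ‹_›)]
      rw [hmv, Finset.sum_congr rfl habs]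
      calc (N:ℝ) * ε = ∑ _i ∈ t, ε := by rw [Finset.sum_const, htcard, nsmul_eq_mul]
        _ ≤ ∑ i ∈ t, |b i| := Finset.sum_le_sum (fun i hi => hts (Finset.mem_coe.mpr hi))
    have hfyle : f y ≤ ‖f‖ * (N:ℝ) ^ (1/pr) := by
      calc f y ≤ ‖f y‖ := le_abs_self _
        _ ≤ ‖f‖ * ‖y‖ := f.le_opNorm y
        _ ≤ ‖f‖ * (N:ℝ) ^ (1/pr) := mul_le_mul_of_nonneg_left hynorm (norm_nonneg f)
    have hNpos : (0:ℝ) < (N:ℝ) := by exact_mod_cast Nat.lt_of_lt_of_le Nat.zero_lt_one hN1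
    have hsplit : (N:ℝ) = (N:ℝ) ^ (1/pr) * (N:ℝ) ^ r := by
      rw [← Real.rpow_add hNpos]
      have : 1/pr + r = 1 := by rw [hr_def]; ring
      rw [this, Real.rpow_one]
    have hfr : ‖f‖ < (N:ℝ) ^ r * ε := by
      have := (div_lt_iff₀ hε).mp hNr
      linarith
    have hfinal : ‖f‖ * (N:ℝ) ^ (1/pr) < (N:ℝ) * ε := by
      have hpow : (0:ℝ) < (N:ℝ) ^ (1/pr) := Real.rpow_pos_of_pos hNpos _
      calc ‖f‖ * (N:ℝ) ^ (1/pr) < ((N:ℝ) ^ r * ε) * (N:ℝ) ^ (1/pr) :=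
            mul_lt_mul_of_pos_right hfr hpow
        _ = ((N:ℝ) ^ (1/pr) * (N:ℝ) ^ r) * ε := by ring
        _ = (N:ℝ) * ε := by rw [← hsplit]
    linarith
  rw [Metric.tendsto_atTop]
  intro ε hε
  obtain ⟨K, hK⟩ := (key (ε/2) (by linarith)).bddAbove
  refine ⟨K + 1, fun i hi => ?_⟩
  rw [Real.dist_eq, sub_zero]
  by_contra hcon
  push_neg at hcon
  have hmem : i ∈ {i : ℕ | ε/2 ≤ |b i|} := by
    simp only [Set.mem_setOf_eq]
    linarith
  have := hK hmem
  omega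

end KMwAux

theorem lp_l1_not_hasKMw (p : ℝ≥0∞) [Fact (1 ≤ p)] (hp : 1 < p) (hp' : p ≠ ⊤) :
    ¬ HasKMw (lp (fun _ : ℕ => lp (fun _ : ℕ => ℝ) 1) p) := by
  rintro ⟨M, h1, h2⟩
  classical
  have hpr0 : 0 < p.toReal :=
    ENNReal.toReal_pos (zero_lt_one.trans hp).ne' hp'
  -- choose, for each band n, a basis vector escaping M n 1
  have hA : ∀ n : ℕ, ∃ j : ℕ, lp.single p n (KMwE j) ∉ M n 1 := by
    intro n
    refine KMw_exists_not_mem p (M n 1) ?_ n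
    have := h1 n 1 one_pos
    norm_num at this
    exact this
  choose J hJ using hA
  set v : ℕ → KMwX p := fun n => lp.single p n (KMwE (J n)) with hv_def
  have hvnorm : ∀ n, ‖v n‖ = 1 := by
    intro n
    rw [hv_def]; simp only
    rw [lp.norm_single (E := fun _ : ℕ => KMwL1) (zero_lt_one.trans hp) n (KMwE (J n)), KMwE_norm]
  set C : Set (KMwX p) := Set.range v with hC_def
  have hC : IsWeaklyPrecompactWith 0 C := by
    constructor
    · rw [isBounded_iff_forall_norm_le]
      exact ⟨1, by rintro x ⟨n, rfl⟩; exact (hvnorm n).le⟩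
    · intro x hx
      simp only [hC_def, Set.mem_range] at hx
      choose m hm using hx
      by_cases hcase : ∃ c : ℕ, {k | m k = c}.Infinite
      · obtain ⟨c, hc⟩ := hcase
        obtain ⟨φ, hφ, hφc⟩ :=
          Filter.extraction_of_frequently_atTop (Nat.frequently_atTop_iff_infinite.mpr hc)
        refine ⟨φ, hφ, fun f hf => ?_⟩
        have hconst : (fun k => f (x (φ k))) = fun _ => f (v c) := by
          funext k
          rw [← hm (φ k), hφc k]
        show limsup (fun k => f (x (φ k))) atTop - liminf (fun k => f (x (φ k))) atTop ≤ 0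
        rw [hconst, limsup_const, liminf_const, sub_self]
      · push_neg at hcase
        have hfin : ∀ c : ℕ, {k | m k = c}.Finite := by
          intro c
          by_contra hcf
          exact hcf (hcase c)
        have hm_tend : Tendsto m atTop atTop := by
          rw [tendsto_atTop]
          intro c
          have hfin2 : {k | m k < c}.Finite := by
            have hsub : {k | m k < c} ⊆ ⋃ i ∈ Set.Iio c, {k | m k = i} := by
              intro k hk
              simp only [Set.mem_iUnion, Set.mem_setOf_eq, Set.mem_Iio]
              exact ⟨m k, hk, rfl⟩
            exact ((Set.finite_Iio c).biUnion (fun i _ => hfin i)).subset hsub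
          obtain ⟨K, hK⟩ := hfin2.bddAbove
          rw [eventually_atTop]
          refine ⟨K + 1, fun k hk => ?_⟩
          by_contra hcon
          push_neg at hcon
          have : k ≤ K := hK hcon
          omega
        obtain ⟨φ, hφ, hmφ⟩ := Filter.strictMono_subseq_of_tendsto_atTop hm_tend
        refine ⟨φ, hφ, fun f hf => ?_⟩
        have htd : Tendsto (fun k => f (x (φ k))) atTop (𝓝 0) := by
          have h0 : Tendsto (fun i => f (lp.single p i (KMwE (J i)))) atTop (𝓝 0) :=
            KMw_tendsto_zero p hp hp' (fun i => KMwE (J i)) (fun i => (KMwE_norm (J i)).le) f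
          have h1' : Tendsto (fun k => m (φ k)) atTop atTop :=
            hm_tend.comp hφ.tendsto_atTop
          have h2' := h0.comp h1'
          have heq : (fun k => f (x (φ k)))
              = (fun i => f (lp.single p i (KMwE (J i)))) ∘ (fun k => m (φ k)) := by
            funext k
            simp only [Function.comp_apply]
            rw [← hm (φ k), hv_def]
          rw [heq]
          exact h2'
        show limsup (fun k => f (x (φ k))) atTop - liminf (fun k => f (x (φ k))) atTop ≤ 0
        rw [htd.limsup_eq, htd.liminf_eq, sub_self]
  obtain ⟨n₀, hsub⟩ := h2 C hC 1 one_pos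
  exact hJ n₀ (hsub ⟨n₀, rfl⟩)
end

section
/- Let X be a real Banach space and (x_n*) a sequence in X* converging to some x* ∈ X* uniformly on every weakly compact subset of X (i.e., with respect to the Mackey topology μ(X*,X)). Then (x_n*) converges to x* uniformly on every weakly precompact subset of X. -/
open Filter Topology

/-- A sequence `(x_n)` in `E` is weakly Cauchy if `(x*(x_n))` converges for every
continuous linear functional `x*`. -/
def IsWeaklyCauchy {E : Type*} [NormedAddCommGroup E] [NormedSpace ℝ E]
    (x : ℕ → E) : Prop :=
  ∀ f : E →L[ℝ] ℝ, ∃ L : ℝ, Tendsto (fun n => f (x n)) atTop (𝓝 L)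

/-- A set `M` is weakly precompact if it is bounded and every sequence in `M` admits a
weakly Cauchy subsequence. -/
def IsWeaklyPrecompact {E : Type*} [NormedAddCommGroup E] [NormedSpace ℝ E]
    (M : Set E) : Prop :=
  Bornology.IsBounded M ∧
    ∀ x : ℕ → E, (∀ n, x n ∈ M) →
      ∃ φ : ℕ → ℕ, StrictMono φ ∧ IsWeaklyCauchy (fun k => x (φ k))

theorem mackey_convergent_unif_on_weaklyPrecompact
    {X : Type*} [NormedAddCommGroup X] [NormedSpace ℝ X] [CompleteSpace X]
    (xs : ℕ → X →L[ℝ] ℝ) (x : X →L[ℝ] ℝ)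
    (h : ∀ C : Set X, IsCompact (toWeakSpace ℝ X '' C) →
      TendstoUniformlyOn (fun n v => xs n v) (fun v => x v) atTop C) :
    ∀ M : Set X, IsWeaklyPrecompact M →
      TendstoUniformlyOn (fun n v => xs n v) (fun v => x v) atTop M := by
  intro M hM
  -- pointwise convergence
  have hpt : ∀ u : X, Tendsto (fun m => xs m u) atTop (𝓝 (x u)) := by
    intro u
    have hc : IsCompact (toWeakSpace ℝ X '' {u}) := by
      rw [Set.image_singleton]; exact isCompact_singleton
    exact (h {u} hc).tendsto_at (Set.mem_singleton u)
  rw [Metric.tendstoUniformlyOn_iff]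
  by_contra hcon
  push_neg at hcon
  obtain ⟨ε, hε, hfr⟩ := hcon
  obtain ⟨φ, hφ, hφP⟩ := extraction_of_frequently_atTop hfr
  choose v hvM hv using hφP
  obtain ⟨ψ, hψ, hcauchy⟩ := hM.2 v hvM
  set n : ℕ → ℕ := fun k => φ (ψ k) with hn_def
  set w : ℕ → X := fun k => v (ψ k) with hw_def
  have hn : StrictMono n := hφ.comp hψ
  have hw : ∀ k, ε ≤ dist (x (w k)) (xs (n k) (w k)) := fun k => hv (ψ k)
  -- for each fixed point, the evaluations converge
  have h1 : ∀ m : ℕ, ∀ᶠ k in atTop, dist (x (w m)) (xs (n k) (w m)) < ε / 2 := by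
    intro m
    have ht : Tendsto (fun k => xs (n k) (w m)) atTop (𝓝 (x (w m))) :=
      (hpt (w m)).comp hn.tendsto_atTop
    have := Metric.tendsto_nhds.mp ht (ε / 2) (by positivity)
    simpa [dist_comm] using this
  -- recursive selection
  have hsel : ∀ N : ℕ, ∃ k, N < k ∧
      ∀ m ≤ N, dist (x (w m)) (xs (n k) (w m)) < ε / 2 := by
    intro N
    have h2 : ∀ᶠ k in atTop, ∀ m ∈ Set.Iic N, dist (x (w m)) (xs (n k) (w m)) < ε / 2 :=
      (eventually_all_finite (Set.finite_Iic N)).mpr fun m _ => h1 m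
    obtain ⟨k, hk1, hk2⟩ := ((eventually_gt_atTop N).and h2).exists
    exact ⟨k, hk1, fun m hm => hk2 m hm⟩
  choose next hnext1 hnext2 using hsel
  set σ : ℕ → ℕ := fun j => Nat.rec 0 (fun _ prev => next prev) j with hσ_def
  have hσsucc : ∀ j, σ (j + 1) = next (σ j) := fun j => rfl
  have hσmono : StrictMono σ := strictMono_nat_of_lt_succ fun j => hnext1 (σ j)
  have hkey : ∀ j, ∀ m ≤ σ j, dist (x (w m)) (xs (n (σ (j + 1))) (w m)) < ε / 2 :=
    fun j => hnext2 (σ j)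
  set u : ℕ → X := fun j => w (σ (j + 1)) - w (σ j) with hu_def
  -- the differences are weakly null
  have hweak : ∀ f : X →L[ℝ] ℝ, Tendsto (fun j => f (u j)) atTop (𝓝 0) := by
    intro f
    obtain ⟨L, hL⟩ := hcauchy f
    have hsucc : Tendsto (fun j => σ (j + 1)) atTop atTop :=
      hσmono.tendsto_atTop.comp (tendsto_add_atTop_nat 1)
    have hA : Tendsto (fun j => f (w (σ (j + 1)))) atTop (𝓝 L) := hL.comp hsucc
    have hB : Tendsto (fun j => f (w (σ j))) atTop (𝓝 L) := hL.comp hσmono.tendsto_atTop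
    have := hA.sub hB
    rw [sub_self] at this
    simpa [hu_def, map_sub] using this
  -- the weakly compact set of differences
  have hC : IsCompact (toWeakSpace ℝ X '' insert 0 (Set.range u)) := by
    have inj : Function.Injective ((topDualPairing ℝ X).flip) :=
      separatingDual_iff_injective.mp inferInstance
    have ht : Tendsto (fun j => toWeakSpace ℝ X (u j)) atTop (𝓝 (toWeakSpace ℝ X 0)) := by
      refine (WeakBilin.tendsto_iff_forall_eval_tendsto (topDualPairing ℝ X).flip inj).mpr ?_
      intro f
      show Tendsto (fun j => f (u j)) atTop (𝓝 (f 0))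
      rw [map_zero]; exact hweak f
    have := ht.isCompact_insert_range
    rw [Set.image_insert_eq, ← Set.range_comp]
    exact this
  have hunif := h _ hC
  rw [Metric.tendstoUniformlyOn_iff] at hunif
  have h2 := hunif (ε / 2) (by positivity)
  have hnt : Tendsto (fun j => n (σ (j + 1))) atTop atTop :=
    hn.tendsto_atTop.comp (hσmono.tendsto_atTop.comp (tendsto_add_atTop_nat 1))
  obtain ⟨j, hj⟩ := (hnt.eventually h2).exists
  have hu : dist (x (u j)) (xs (n (σ (j + 1))) (u j)) < ε / 2 :=
    hj (u j) (Set.mem_insert_of_mem _ ⟨j, rfl⟩)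
  have hwj : dist (x (w (σ j))) (xs (n (σ (j + 1))) (w (σ j))) < ε / 2 :=
    hkey j (σ j) le_rfl
  have hcontra := hw (σ (j + 1))
  have key : x (w (σ (j + 1))) - xs (n (σ (j + 1))) (w (σ (j + 1))) =
      (x (u j) - xs (n (σ (j + 1))) (u j)) + (x (w (σ j)) - xs (n (σ (j + 1))) (w (σ j))) := by
    simp only [hu_def, map_sub]
    ring
  rw [Real.dist_eq, key] at hcontra
  rw [Real.dist_eq] at hu hwj
  have := (abs_add_le (x (u j) - xs (n (σ (j + 1))) (u j))
    (x (w (σ j)) - xs (n (σ (j + 1))) (w (σ j)))).trans_lt (add_lt_add hu hwj)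
  linarith
end
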